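/- arXiv:1812.00446 — 6 statements merged into one kernel-verified Lean document; each statement's English description precedes it below -/
import Mathlib

section
/- In a quasitriangular Hopf algebra H with R-matrix R = \sum_i a_i \otimes b_i, the Drinfeld element u = \sum_i S(b_i) a_i satisfies u = \sum_i b_i S^{-1}(a_i), and its inverse is given by u^{-1} = \sum_i S^{-2}(b_i) a_i = \sum_i S^{-1}(b_i) S(a_i) = \sum_i b_i S^2(a_i). -/
open scoped TensorProduct
open TensorProduct

variable {k A : Type} [Field k] [Ring A] [HopfAlgebra k A]

/-- The antipode of the Hopf algebra `A`. -/
noncomputable def ant : A →ₗ[k] A := HopfAlgebra.antipode k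

/-!
Write `R = ∑ aᵢ ⊗ bᵢ` and `u = ∑ S(bᵢ) aᵢ`. Contracting the hexagon identities with the counit and
with the antipode shows that `(S ⊗ id) R` and `(id ⊗ S⁻¹) R` are both left inverses of the unit `R`,
hence equal, and then `(S ⊗ S) R = R`. The formula `u = ∑ bᵢ S⁻¹(aᵢ)` and the three expressions
for `u⁻¹` are images of these equal tensors under maps `x ⊗ y ↦ f(y) g(x)`.
Contracting `R Δ(x) = Δᵒᵖ(x) R` with `x ⊗ y ↦ S(y) x` gives `∑ S(x₂) u x₁ = ε(x) u`, that is
`L_u ⋆ S = ε u` for the convolution `(f ⋆ g)(x) = ∑ g(x₂) f(x₁)`; as `S ⋆ S² = ε`, this yields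
`u x = S²(x) u`. Finally the second hexagon identity gives `∑ bᵢ u aᵢ = 1`, which together with
`u x = S²(x) u` says that `∑ S⁻²(bᵢ) aᵢ` is inverse to `u`.
-/

open Coalgebra HopfAlgebra LinearMap

section Algebra

variable {R H : Type*} [CommSemiring R] [Semiring H] [Algebra R H]

noncomputable def mulFlip {M N : Type*} [AddCommMonoid M] [Module R M] [AddCommMonoid N]
    [Module R N] (f : M →ₗ[R] H) (g : N →ₗ[R] H) : N ⊗[R] M →ₗ[R] H :=
  mul' R H ∘ₗ map f g ∘ₗ (TensorProduct.comm R N M).toLinearMap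

@[simp] lemma mulFlip_tmul {M N : Type*} [AddCommMonoid M] [Module R M] [AddCommMonoid N]
    [Module R N] (f : M →ₗ[R] H) (g : N →ₗ[R] H) (x : N) (y : M) :
    mulFlip f g (x ⊗ₜ y) = f y * g x := by
  simp [mulFlip]

lemma eq_one_of_tmul_one_eq_one {x : H} (h : x ⊗ₜ[R] (1 : H) = 1) : x = 1 := by
  simpa [Algebra.TensorProduct.one_def] using congrArg (mul' R H) h

lemma eq_one_of_one_tmul_eq_one {x : H} (h : (1 : H) ⊗ₜ[R] x = 1) : x = 1 := by
  simpa [Algebra.TensorProduct.one_def] using congrArg (mul' R H) h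

end Algebra

section HopfAlgebra

variable {R H : Type*} [CommSemiring R] [Semiring H] [HopfAlgebra R H]

open MulOpposite WithConv

lemma antipode_algebraMap (c : R) : antipode R (algebraMap R H c) = algebraMap R H c := by
  rw [Algebra.algebraMap_eq_smul_one, map_smul, antipode_one]

lemma mulFlip_inv_antipode_comul (Sinv : H →ₗ[R] H) (hS1 : ∀ x, Sinv (antipode R x) = x)
    (hS2 : ∀ x, antipode R (Sinv x) = x) (x : H) :
    mulFlip Sinv id (comul (R := R) x) = algebraMap R H (counit x) := by
  refine (Function.LeftInverse.injective hS1) ?_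
  rw [← (ℛ R x).eq]
  simp only [map_sum, mulFlip_tmul, id_coe, id_eq, antipode_mul_antidistrib, hS2]
  rw [sum_antipode_mul_eq_algebraMap_counit, antipode_algebraMap]

noncomputable def toOpConv (f : H →ₗ[R] H) : WithConv (H →ₗ[R] Hᵐᵒᵖ) :=
  toConv ((opLinearEquiv R).toLinearMap ∘ₗ f)

lemma unop_toOpConv_mul_apply (f g : H →ₗ[R] H) {x : H} {κ : Type*} (r : Repr R x κ) :
    unop ((toOpConv f * toOpConv g) x) = ∑ t ∈ r.index, g (r.right t) * f (r.left t) := by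
  simp [r.convMul_apply, toOpConv]

lemma toOpConv_antipode_mul_antipode_sq :
    toOpConv (antipode R) * toOpConv (antipode R ∘ₗ antipode R)
      = (1 : WithConv (H →ₗ[R] Hᵐᵒᵖ)) := by
  ext x
  apply unop_injective
  rw [unop_toOpConv_mul_apply _ _ (ℛ R x)]
  simp only [coe_comp, Function.comp_apply, ← antipode_mul_antidistrib, ← map_sum,
    sum_mul_antipode_eq_algebraMap_counit, antipode_algebraMap]
  rfl

end HopfAlgebra

section RMatrix

variable {R H : Type*} [CommSemiring R] [Semiring H] [HopfAlgebra R H]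
  {ι : Type*} [Fintype ι] {a b : ι → H}

lemma sum_comul_tmul_eq_sum_sum
    (hex : (∑ i, comul (R := R) (a i) ⊗ₜ[R] b i : (H ⊗[R] H) ⊗[R] H)
      = (∑ i, (a i ⊗ₜ[R] (1 : H)) ⊗ₜ[R] b i) * (∑ i, ((1 : H) ⊗ₜ[R] a i) ⊗ₜ[R] b i)) :
    (∑ i, comul (R := R) (a i) ⊗ₜ[R] b i : (H ⊗[R] H) ⊗[R] H)
      = ∑ i, ∑ j, (a i ⊗ₜ a j) ⊗ₜ (b i * b j) := by
  simp [hex, Finset.sum_mul_sum, Algebra.TensorProduct.tmul_mul_tmul]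

lemma sum_tmul_comul_eq_sum_sum
    (hex : (∑ i, a i ⊗ₜ[R] comul (R := R) (b i) : H ⊗[R] (H ⊗[R] H))
      = (∑ i, a i ⊗ₜ[R] ((1 : H) ⊗ₜ[R] b i)) * (∑ i, a i ⊗ₜ[R] (b i ⊗ₜ[R] (1 : H)))) :
    (∑ i, a i ⊗ₜ[R] comul (R := R) (b i) : H ⊗[R] (H ⊗[R] H))
      = ∑ i, ∑ j, (a i * a j) ⊗ₜ (b j ⊗ₜ b i) := by
  simp [hex, Finset.sum_mul_sum, Algebra.TensorProduct.tmul_mul_tmul]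

lemma sum_counit_left_smul_eq_one (hunit : IsUnit (∑ i, a i ⊗ₜ[R] b i))
    (hex : (∑ i, comul (R := R) (a i) ⊗ₜ[R] b i : (H ⊗[R] H) ⊗[R] H)
      = ∑ i, ∑ j, (a i ⊗ₜ a j) ⊗ₜ (b i * b j)) :
    ∑ i, counit (R := R) (a i) • b i = 1 := by
  refine eq_one_of_one_tmul_eq_one (R := R) (hunit.mul_eq_right.1 ?_)
  have h := congrArg (map ((TensorProduct.lid R H).toLinearMap ∘ₗ rTensor H counit) id) hex
  simp only [map_sum, map_tmul, coe_comp, Function.comp_apply, rTensor_counit_comul,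
    LinearEquiv.coe_coe, lid_tmul, one_smul, rTensor_tmul, id_coe, id_eq] at h
  rw [tmul_sum, Finset.sum_mul_sum]
  conv_rhs => rw [h]
  simp only [Algebra.TensorProduct.tmul_mul_tmul, one_mul, smul_mul_assoc, tmul_smul, smul_tmul']

lemma sum_counit_right_smul_eq_one (hunit : IsUnit (∑ i, a i ⊗ₜ[R] b i))
    (hex : (∑ i, a i ⊗ₜ[R] comul (R := R) (b i) : H ⊗[R] (H ⊗[R] H))
      = ∑ i, ∑ j, (a i * a j) ⊗ₜ (b j ⊗ₜ b i)) :
    ∑ i, counit (R := R) (b i) • a i = 1 := by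
  refine eq_one_of_tmul_one_eq_one (R := R) (hunit.mul_eq_right.1 ?_)
  have h := congrArg (map id ((TensorProduct.rid R H).toLinearMap ∘ₗ lTensor H counit)) hex
  simp only [map_sum, map_tmul, coe_comp, Function.comp_apply, lTensor_counit_comul,
    LinearEquiv.coe_coe, rid_tmul, one_smul, lTensor_tmul, id_coe, id_eq] at h
  rw [sum_tmul, Finset.sum_mul_sum]
  conv_rhs => rw [h]
  simp only [Algebra.TensorProduct.tmul_mul_tmul, one_mul, smul_mul_assoc, smul_tmul]

lemma sum_antipode_tmul_mul_eq_one
    (hex : (∑ i, comul (R := R) (a i) ⊗ₜ[R] b i : (H ⊗[R] H) ⊗[R] H)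
      = ∑ i, ∑ j, (a i ⊗ₜ a j) ⊗ₜ (b i * b j))
    (hε : ∑ i, counit (R := R) (a i) • b i = 1) :
    (∑ i, antipode R (a i) ⊗ₜ[R] b i) * (∑ i, a i ⊗ₜ[R] b i) = 1 := by
  have h := congrArg (map (mul' R H ∘ₗ rTensor H (antipode R)) id) hex
  simp only [map_sum, map_tmul, coe_comp, Function.comp_apply, mul_antipode_rTensor_comul_apply,
    rTensor_tmul, mul'_apply, id_coe, id_eq] at h
  rw [Finset.sum_mul_sum]
  simp only [Algebra.TensorProduct.tmul_mul_tmul]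
  rw [← h]
  calc _ = (1 : H) ⊗ₜ[R] (∑ i, counit (R := R) (a i) • b i) := by
        simp only [tmul_sum, Algebra.algebraMap_eq_smul_one, smul_tmul]
    _ = 1 := by rw [hε, Algebra.TensorProduct.one_def]

lemma sum_tmul_inv_antipode_mul_eq_one (Sinv : H →ₗ[R] H) (hS1 : ∀ x, Sinv (antipode R x) = x)
    (hS2 : ∀ x, antipode R (Sinv x) = x)
    (hex : (∑ i, a i ⊗ₜ[R] comul (R := R) (b i) : H ⊗[R] (H ⊗[R] H))
      = ∑ i, ∑ j, (a i * a j) ⊗ₜ (b j ⊗ₜ b i))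
    (hε : ∑ i, counit (R := R) (b i) • a i = 1) :
    (∑ i, a i ⊗ₜ[R] Sinv (b i)) * (∑ i, a i ⊗ₜ[R] b i) = 1 := by
  have h := congrArg (map id (mulFlip Sinv id)) hex
  simp only [map_sum, map_tmul, id_coe, id_eq, mulFlip_inv_antipode_comul Sinv hS1 hS2,
    mulFlip_tmul] at h
  rw [Finset.sum_mul_sum]
  simp only [Algebra.TensorProduct.tmul_mul_tmul]
  rw [← h]
  calc _ = (∑ i, counit (R := R) (b i) • a i) ⊗ₜ[R] (1 : H) := by
        simp only [sum_tmul, Algebra.algebraMap_eq_smul_one, smul_tmul]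
    _ = 1 := by rw [hε, Algebra.TensorProduct.one_def]

lemma sum_antipode_tmul_eq_sum_tmul_inv_antipode (Sinv : H →ₗ[R] H)
    (hS1 : ∀ x, Sinv (antipode R x) = x) (hS2 : ∀ x, antipode R (Sinv x) = x)
    (hunit : IsUnit (∑ i, a i ⊗ₜ[R] b i))
    (hex1 : (∑ i, comul (R := R) (a i) ⊗ₜ[R] b i : (H ⊗[R] H) ⊗[R] H)
      = ∑ i, ∑ j, (a i ⊗ₜ a j) ⊗ₜ (b i * b j))
    (hex2 : (∑ i, a i ⊗ₜ[R] comul (R := R) (b i) : H ⊗[R] (H ⊗[R] H))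
      = ∑ i, ∑ j, (a i * a j) ⊗ₜ (b j ⊗ₜ b i)) :
    ∑ i, antipode R (a i) ⊗ₜ[R] b i = ∑ i, a i ⊗ₜ[R] Sinv (b i) :=
  hunit.mul_right_cancel <|
    (sum_antipode_tmul_mul_eq_one hex1 (sum_counit_left_smul_eq_one hunit hex1)).trans
      (sum_tmul_inv_antipode_mul_eq_one Sinv hS1 hS2 hex2
        (sum_counit_right_smul_eq_one hunit hex2)).symm

lemma sum_antipode_sq_tmul_antipode_sq
    (h : ∑ i, antipode R (a i) ⊗ₜ[R] antipode R (b i) = ∑ i, a i ⊗ₜ[R] b i) :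
    ∑ i, antipode R (antipode R (a i)) ⊗ₜ[R] antipode R (antipode R (b i))
      = ∑ i, a i ⊗ₜ[R] b i := by
  refine Eq.trans ?_ h
  simpa using congrArg (map (antipode R) (antipode R)) h

variable (R) in
noncomputable def drinfeldElement (a b : ι → H) : H := ∑ i, antipode R (b i) * a i

lemma sum_antipode_mul_drinfeldElement_mul
    (hΔ : ∀ x : H, (∑ i, a i ⊗ₜ[R] b i) * comul x
        = TensorProduct.comm R H H (comul x) * (∑ i, a i ⊗ₜ[R] b i))
    {x : H} {κ : Type*} (r : Repr R x κ) :
    ∑ t ∈ r.index, antipode R (r.right t) * (drinfeldElement R a b * r.left t)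
      = counit (R := R) x • drinfeldElement R a b := by
  have h := hΔ x
  rw [← r.eq, map_sum, Finset.sum_mul_sum, Finset.sum_mul_sum] at h
  replace h := congrArg (mulFlip (antipode R) id) h
  simp only [map_sum, comm_tmul, Algebra.TensorProduct.tmul_mul_tmul, mulFlip_tmul, id_coe, id_eq,
    antipode_mul_antidistrib] at h
  calc _ = ∑ i, ∑ t ∈ r.index, antipode R (r.right t) * antipode R (b i) * (a i * r.left t) := by
        simp only [drinfeldElement, Finset.sum_mul, Finset.mul_sum, mul_assoc]
        exact Finset.sum_comm
    _ = ∑ i, antipode R (b i) * (∑ t ∈ r.index, antipode R (r.left t) * r.right t) * a i := by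
        rw [h, Finset.sum_comm]
        simp only [Finset.mul_sum, Finset.sum_mul, mul_assoc]
    _ = counit (R := R) x • drinfeldElement R a b := by
        simp only [sum_antipode_mul_eq_smul r, drinfeldElement, Finset.smul_sum, mul_smul_comm,
          smul_mul_assoc, mul_one]

open MulOpposite in
lemma drinfeldElement_mul
    (hΔ : ∀ x : H, (∑ i, a i ⊗ₜ[R] b i) * comul x
        = TensorProduct.comm R H H (comul x) * (∑ i, a i ⊗ₜ[R] b i)) (x : H) :
    drinfeldElement R a b * x = antipode R (antipode R x) * drinfeldElement R a b := by
  set u := drinfeldElement R a b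
  have hu : toOpConv (mulLeft R u) * toOpConv (antipode R) = toOpConv (smulRight counit u) := by
    ext y
    apply unop_injective
    rw [unop_toOpConv_mul_apply _ _ (ℛ R y)]
    simpa [toOpConv] using sum_antipode_mul_drinfeldElement_mul hΔ (ℛ R y)
  have h : toOpConv (mulLeft R u)
      = toOpConv (smulRight counit u) * toOpConv (antipode R ∘ₗ antipode R) := by
    rw [← hu, mul_assoc, toOpConv_antipode_mul_antipode_sq, mul_one]
  let r := ℛ R x
  calc u * x = unop (toOpConv (mulLeft R u) x) := rfl
    _ = unop ((toOpConv (smulRight counit u) * toOpConv (antipode R ∘ₗ antipode R) :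
          WithConv (H →ₗ[R] Hᵐᵒᵖ)) x) := by rw [h]
    _ = ∑ t ∈ r.index, antipode R (antipode R (r.right t)) * (counit (R := R) (r.left t) • u) :=
        unop_toOpConv_mul_apply _ _ r
    _ = antipode R (antipode R (∑ t ∈ r.index, counit (R := R) (r.left t) • r.right t)) * u := by
        simp only [map_sum, map_smul, Finset.sum_mul, mul_smul_comm, smul_mul_assoc]
    _ = antipode R (antipode R x) * u := by rw [sum_counit_smul]

lemma sum_mul_drinfeldElement_mul_eq_one
    (hex : (∑ i, a i ⊗ₜ[R] comul (R := R) (b i) : H ⊗[R] (H ⊗[R] H))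
      = ∑ i, ∑ j, (a i * a j) ⊗ₜ (b j ⊗ₜ b i))
    (hε : ∑ i, counit (R := R) (b i) • a i = 1) :
    ∑ i, b i * (drinfeldElement R a b * a i) = 1 := by
  have h := congrArg (mulFlip (mul' R H ∘ₗ lTensor H (antipode R)) id) hex
  simp only [map_sum, mulFlip_tmul, coe_comp, Function.comp_apply,
    mul_antipode_lTensor_comul_apply, lTensor_tmul, mul'_apply, id_coe, id_eq,
    ← Algebra.smul_def, hε] at h
  rw [h, Finset.sum_comm]
  simp only [drinfeldElement, Finset.sum_mul, Finset.mul_sum, mul_assoc]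

end RMatrix

/-- In a quasitriangular Hopf algebra `H` with `R = ∑ i, a i ⊗ b i`,
the Drinfeld element `u = ∑ S(b i) * a i` equals `∑ b i * S⁻¹(a i)`, and its inverse is
`∑ S⁻²(b i) * a i = ∑ S⁻¹(b i) * S(a i) = ∑ b i * S²(a i)`. -/
theorem drinfeld_element
    (Sinv : A →ₗ[k] A)
    (hS1 : ∀ x : A, Sinv (ant (k := k) x) = x)
    (hS2 : ∀ x : A, ant (k := k) (Sinv x) = x)
    (ι : Type) [Fintype ι] (a b : ι → A)
    (hRunit : IsUnit (∑ i, a i ⊗ₜ[k] b i))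
    (hIntertwine : ∀ x : A, (∑ i, a i ⊗ₜ[k] b i) * Coalgebra.comul x
        = (TensorProduct.comm k A A) (Coalgebra.comul x) * (∑ i, a i ⊗ₜ[k] b i))
    (hex1 : (∑ i, (Coalgebra.comul (R := k) (a i)) ⊗ₜ[k] b i : (A ⊗[k] A) ⊗[k] A)
        = (∑ i, (a i ⊗ₜ[k] (1:A)) ⊗ₜ[k] b i) * (∑ i, ((1:A) ⊗ₜ[k] a i) ⊗ₜ[k] b i))
    (hex2 : (∑ i, a i ⊗ₜ[k] (Coalgebra.comul (R := k) (b i)) : A ⊗[k] (A ⊗[k] A))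
        = (∑ i, a i ⊗ₜ[k] ((1:A) ⊗ₜ[k] b i)) * (∑ i, a i ⊗ₜ[k] (b i ⊗ₜ[k] (1:A)))) :
    (∑ i, ant (k := k) (b i) * a i) = (∑ i, b i * Sinv (a i))
    ∧ (∑ i, ant (k := k) (b i) * a i) * (∑ i, Sinv (Sinv (b i)) * a i) = 1
    ∧ (∑ i, Sinv (Sinv (b i)) * a i) * (∑ i, ant (k := k) (b i) * a i) = 1
    ∧ (∑ i, Sinv (Sinv (b i)) * a i) = (∑ i, Sinv (b i) * ant (k := k) (a i))
    ∧ (∑ i, Sinv (Sinv (b i)) * a i) = (∑ i, b i * ant (k := k) (ant (k := k) (a i))) := by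
  simp only [ant] at hS1 hS2 ⊢
  replace hex1 := sum_comul_tmul_eq_sum_sum hex1
  replace hex2 := sum_tmul_comul_eq_sum_sum hex2
  have hRS := sum_antipode_tmul_eq_sum_tmul_inv_antipode Sinv hS1 hS2 hRunit hex1 hex2
  have hSS : ∑ i, antipode k (a i) ⊗ₜ[k] antipode k (b i) = ∑ i, a i ⊗ₜ[k] b i := by
    simpa [hS2] using congrArg (map id (antipode k)) hRS
  have hv : ∑ i, Sinv (Sinv (b i)) * a i = ∑ i, b i * antipode k (antipode k (a i)) := by
    simpa [hS1] using
      (congrArg (mulFlip (Sinv ∘ₗ Sinv) id) (sum_antipode_sq_tmul_antipode_sq hSS)).symm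
  have hu := drinfeldElement_mul hIntertwine
  have hbua := sum_mul_drinfeldElement_mul_eq_one hex2 (sum_counit_right_smul_eq_one hRunit hex2)
  refine ⟨by simpa [hS1, hS2] using congrArg (mulFlip (antipode k) Sinv) hRS, ?_, ?_,
    by simpa using (congrArg (mulFlip Sinv id) hRS).symm, hv⟩
  · change drinfeldElement k a b * _ = 1
    rw [← hbua, Finset.mul_sum]
    refine Finset.sum_congr rfl fun i _ => ?_
    rw [← mul_assoc, hu, hS2, hS2, mul_assoc]
  · change _ * drinfeldElement k a b = 1
    rw [hv, ← hbua, Finset.sum_mul]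
    refine Finset.sum_congr rfl fun i _ => ?_
    rw [mul_assoc, hu]
end

section
/- Let H be a finite-dimensional Hopf algebra and \mu^r a right integral on the dual Hopf algebra H^* (i.e. \mu^r \varphi = \varepsilon(\varphi)\mu^r for all \varphi in H^*). Then for all h in H and \varphi in H^*, the product in H^* satisfies \mu^r(h \cdot ?) \varphi = \mu^r(h' \cdot ?) \varphi(S^{-1}(h'')), where \Delta(h) = h' \otimes h'' and \mu^r(h?) denotes the functional x \mapsto \mu^r(hx). -/
/-!
Put `ψⱼ := φ(S⁻¹(h₂ⱼ) ·)`. The integral property gives `φ(S⁻¹(h₂ⱼ)) μʳ(h₁ⱼ x) = (μʳ ψⱼ)(h₁ⱼ x)`,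
and the right-hand side is the pairing of `μʳ ⊗ φ` with `(1 ⊗ S⁻¹(h₂ⱼ)) Δ(h₁ⱼ) Δ(x)`. Summing
over `j`, coassociativity and the antipode axiom for `S⁻¹` on the co-opposite coalgebra give
`∑ⱼ h₁ⱼ' ⊗ S⁻¹(h₂ⱼ) h₁ⱼ'' = h ⊗ 1`, so the sum is the pairing of `μʳ ⊗ φ` with
`(h ⊗ 1) Δ(x)`, which is `(μʳ(h ·) φ)(x)`.
-/

open scoped TensorProduct
open TensorProduct

variable {k A : Type} [Field k] [Ring A] [HopfAlgebra k A]

/-- Convolution product on the dual Hopf algebra `H* = O(H)`. -/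
noncomputable def conv (φ ψ : Module.Dual k A) : Module.Dual k A :=
  (LinearMap.mul' k k) ∘ₗ (TensorProduct.map φ ψ) ∘ₗ (Coalgebra.comul (R := k))

section InverseAntipode

open Coalgebra HopfAlgebra

variable {R H : Type*} [CommSemiring R] [Semiring H] [HopfAlgebra R H]
  {Sinv : H →ₗ[R] H}

lemma inv_antipode_antipode_mul (hS1 : ∀ x : H, Sinv (antipode R x) = x)
    (hS2 : ∀ x : H, antipode R (Sinv x) = x) (u v : H) :
    Sinv (antipode R u * v) = Sinv v * u := by
  conv_lhs => rw [← hS2 v, ← antipode_mul_antidistrib, hS1]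

lemma inv_antipode_one (hS1 : ∀ x : H, Sinv (antipode R x) = x) : Sinv 1 = 1 := by
  simpa [antipode_one] using hS1 1

lemma sum_one_tmul_inv_antipode_mul_comul (hS1 : ∀ x : H, Sinv (antipode R x) = x)
    (hS2 : ∀ x : H, antipode R (Sinv x) = x) {c : H} {ι : Type*} {s : Finset ι}
    {c₁ c₂ : ι → H} (hΔ : comul (R := R) c = ∑ j ∈ s, c₁ j ⊗ₜ[R] c₂ j) :
    ∑ j ∈ s, (1 ⊗ₜ[R] Sinv (c₂ j)) * comul (c₁ j) = c ⊗ₜ[R] (1 : H) := by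
  -- `G (u ⊗ v) = S⁻¹(v) u`, written so that `G ∘ Δ` is visibly `S⁻¹ ∘ η ∘ ε`.
  set G : H ⊗[R] H →ₗ[R] H := Sinv ∘ₗ LinearMap.mul' R H ∘ₗ (antipode R).rTensor H
  have hG : G ∘ₗ comul = Sinv ∘ₗ Algebra.linearMap R H ∘ₗ counit := by
    simp only [G, LinearMap.comp_assoc, mul_antipode_rTensor_comul]
  have one_tmul_mul (t : H ⊗[R] H) (b : H) :
      (1 ⊗ₜ[R] Sinv b) * t = G.lTensor H (TensorProduct.assoc R H H H (t ⊗ₜ b)) := by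
    induction t using TensorProduct.induction_on with
    | zero => simp
    | tmul u v => simp [G, inv_antipode_antipode_mul hS1 hS2]
    | add t t' ht ht' => simp only [mul_add, add_tmul, map_add, ht, ht']
  calc ∑ j ∈ s, (1 ⊗ₜ[R] Sinv (c₂ j)) * comul (c₁ j)
      = G.lTensor H (TensorProduct.assoc R H H H (comul.rTensor H (comul c))) := by
        simp only [hΔ, map_sum, LinearMap.rTensor_tmul, one_tmul_mul]
    _ = (G ∘ₗ comul).lTensor H (comul c) := by
        rw [coassoc_apply, ← LinearMap.lTensor_comp_apply]
    _ = c ⊗ₜ[R] (1 : H) := by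
        rw [hG, LinearMap.lTensor_comp_apply, LinearMap.lTensor_comp_apply,
          lTensor_counit_comul]
        simp [inv_antipode_one hS1]

end InverseAntipode

lemma conv_comp_mulLeft_apply (f g : Module.Dual k A) (u v x : A) :
    conv (f ∘ₗ LinearMap.mulLeft k u) (g ∘ₗ LinearMap.mulLeft k v) x
      = (LinearMap.mul' k k ∘ₗ TensorProduct.map f g) ((u ⊗ₜ[k] v) * Coalgebra.comul x) := by
  simp only [conv, TensorProduct.map_comp, ← LinearMap.mulLeft_tmul, LinearMap.comp_apply,
    LinearMap.mulLeft_apply]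

theorem right_integral_shift_general
    (Sinv : A →ₗ[k] A)
    (hS1 : ∀ x : A, Sinv (HopfAlgebra.antipode (R := k) x) = x)
    (hS2 : ∀ x : A, HopfAlgebra.antipode (R := k) (Sinv x) = x)
    (μr : Module.Dual k A)
    (hInt : ∀ φ : Module.Dual k A, conv μr φ = φ 1 • μr)
    (h : A) (φ : Module.Dual k A)
    (ι : Type) (s : Finset ι) (h1 h2 : ι → A)
    (hΔ : Coalgebra.comul (R := k) h = ∑ j ∈ s, h1 j ⊗ₜ[k] h2 j) :
    conv (μr ∘ₗ LinearMap.mulLeft k h) φ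
      = ∑ j ∈ s, φ (Sinv (h2 j)) • (μr ∘ₗ LinearMap.mulLeft k (h1 j)) := by
  ext x
  set P := LinearMap.mul' k k ∘ₗ TensorProduct.map μr φ
  have lhs : conv (μr ∘ₗ LinearMap.mulLeft k h) φ x = P ((h ⊗ₜ[k] 1) * Coalgebra.comul x) := by
    simpa [P] using conv_comp_mulLeft_apply μr φ h 1 x
  have term (j : ι) : φ (Sinv (h2 j)) * μr (h1 j * x)
      = P ((1 ⊗ₜ[k] Sinv (h2 j)) * Coalgebra.comul (h1 j) * Coalgebra.comul x) := by
    have hψ := conv_comp_mulLeft_apply μr φ 1 (Sinv (h2 j)) (h1 j * x)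
    rw [LinearMap.mulLeft_one, LinearMap.comp_id, hInt] at hψ
    simpa [P, mul_assoc, Bialgebra.comul_mul] using hψ
  simp only [LinearMap.sum_apply, LinearMap.smul_apply, LinearMap.comp_apply,
    LinearMap.mulLeft_apply, smul_eq_mul, term, ← map_sum, ← Finset.sum_mul,
    sum_one_tmul_inv_antipode_mul_comul hS1 hS2 hΔ, lhs]

/-- If `μʳ` is a right integral on `H*` (`μʳ φ = φ(1) μʳ`), then for all
`h ∈ H`, `φ ∈ H*`, with `Δ(h) = ∑ h₁ j ⊗ h₂ j`, one has
`μʳ(h·?) φ = ∑ j, φ(S⁻¹(h₂ j)) • μʳ(h₁ j ·?)`. -/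
theorem right_integral_shift
    [FiniteDimensional k A]
    (Sinv : A →ₗ[k] A)
    (hS1 : ∀ x : A, Sinv (HopfAlgebra.antipode (R := k) x) = x)
    (hS2 : ∀ x : A, HopfAlgebra.antipode (R := k) (Sinv x) = x)
    (μr : Module.Dual k A)
    (hInt : ∀ φ : Module.Dual k A, conv μr φ = φ 1 • μr)
    (h : A) (φ : Module.Dual k A)
    (ι : Type) (s : Finset ι) (h1 h2 : ι → A)
    (hΔ : Coalgebra.comul (R := k) h = ∑ j ∈ s, h1 j ⊗ₜ[k] h2 j) :
    conv (μr ∘ₗ LinearMap.mulLeft k h) φ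
      = ∑ j ∈ s, φ (Sinv (h2 j)) • (μr ∘ₗ LinearMap.mulLeft k (h1 j)) :=
  right_integral_shift_general Sinv hS1 hS2 μr hInt h φ ι s h1 h2 hΔ
end

section
/- Let H be a finite-dimensional Hopf algebra with pivotal element g, right integral \mu^r and left integral \mu^l = \mu^r \circ S. Then for all x, y in H: \mu^r(gxy) = \mu^r(gyx) and \mu^l(g^{-1}xy) = \mu^l(g^{-1}yx); i.e. the functionals \mu^r(g \cdot ?) and \mu^l(g^{-1} \cdot ?) are trace-like (symmetric linear forms). -/
open scoped TensorProduct
open TensorProduct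

variable {k A : Type} [Field k] [Ring A] [HopfAlgebra k A]

section TwistedTrace

variable {M : Type*} {R : Type*} [Monoid R]

theorem apply_mul_comm_of_apply_mul_eq_conj (f : R → M) {g ginv : R} (hg' : ginv * g = 1)
    (hf : ∀ x y, f (x * y) = f (g * y * ginv * x)) (x y : R) :
    f (g * (x * y)) = f (g * (y * x)) :=
  calc f (g * (x * y)) = f (g * x * y) := by rw [mul_assoc]
    _ = f (g * y * ginv * (g * x)) := hf _ _
    _ = f (g * (y * x)) := by simp only [mul_assoc, ← mul_assoc ginv, hg', one_mul]

theorem leftInverse_sq_eq_conj {S Sinv : R → R} (hS : Function.LeftInverse Sinv S)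
    {g ginv : R} (hg : g * ginv = 1) (hSS : ∀ x, S (S x) = g * x * ginv) (z : R) :
    Sinv (Sinv z) = ginv * z * g := by
  have hz : S (S (ginv * z * g)) = z := by
    simp only [hSS, mul_assoc, hg, mul_one, ← mul_assoc g ginv, one_mul]
  conv_lhs => rw [← hz, hS, hS]

end TwistedTrace

theorem pivotal_integral_trace_like_general
    (Sinv : A →ₗ[k] A)
    (hS1 : ∀ x : A, Sinv (HopfAlgebra.antipode (R := k) x) = x)
    (g ginv : A)
    (hg : g * ginv = 1) (hg' : ginv * g = 1)
    (hpiv : ∀ x : A, HopfAlgebra.antipode (R := k) (HopfAlgebra.antipode (R := k) x)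
        = g * x * ginv)
    (μr : Module.Dual k A)
    (μl : Module.Dual k A)
    (hr : ∀ x y : A,
      μr (x * y) = μr (HopfAlgebra.antipode (R := k) (HopfAlgebra.antipode (R := k) y) * x))
    (hl : ∀ x y : A, μl (x * y) = μl (Sinv (Sinv y) * x)) :
    ∀ x y : A, μr (g * (x * y)) = μr (g * (y * x))
      ∧ μl (ginv * (x * y)) = μl (ginv * (y * x)) := by
  have hr' : ∀ x y, μr (x * y) = μr (g * y * ginv * x) := fun x y => by rw [hr, hpiv]
  have hl' : ∀ x y, μl (x * y) = μl (ginv * y * g * x) := fun x y => by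
    rw [hl, leftInverse_sq_eq_conj (S := HopfAlgebra.antipode k) hS1 hg hpiv]
  exact fun x y => ⟨apply_mul_comm_of_apply_mul_eq_conj μr hg' hr' x y,
    apply_mul_comm_of_apply_mul_eq_conj μl hg hl' x y⟩

/-- With pivotal element `g` (`S² = g · g⁻¹`), right integral `μʳ`
(satisfying `μʳ(xy) = μʳ(S²(y)x)`) and left integral `μˡ = μʳ ∘ S` (satisfying
`μˡ(xy) = μˡ(S⁻²(y)x)`), the functionals `μʳ(g·?)` and `μˡ(g⁻¹·?)` are symmetric:
`μʳ(gxy) = μʳ(gyx)` and `μˡ(g⁻¹xy) = μˡ(g⁻¹yx)`. -/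
theorem pivotal_integral_trace_like
    [FiniteDimensional k A]
    (Sinv : A →ₗ[k] A)
    (hS1 : ∀ x : A, Sinv (HopfAlgebra.antipode (R := k) x) = x)
    (hS2 : ∀ x : A, HopfAlgebra.antipode (R := k) (Sinv x) = x)
    (g ginv : A)
    (hg : g * ginv = 1) (hg' : ginv * g = 1)
    (hgrouplike : Coalgebra.comul (R := k) g = g ⊗ₜ[k] g)
    (hpiv : ∀ x : A, HopfAlgebra.antipode (R := k) (HopfAlgebra.antipode (R := k) x)
        = g * x * ginv)
    (μr : Module.Dual k A)
    (hInt : ∀ φ : Module.Dual k A, conv μr φ = φ 1 • μr)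
    (μl : Module.Dual k A)
    (hμl : μl = μr ∘ₗ HopfAlgebra.antipode (R := k))
    (hr : ∀ x y : A,
      μr (x * y) = μr (HopfAlgebra.antipode (R := k) (HopfAlgebra.antipode (R := k) y) * x))
    (hl : ∀ x y : A, μl (x * y) = μl (Sinv (Sinv y) * x)) :
    ∀ x y : A, μr (g * (x * y)) = μr (g * (y * x))
      ∧ μl (ginv * (x * y)) = μl (ginv * (y * x)) :=
  pivotal_integral_trace_like_general Sinv hS1 g ginv hg hg' hpiv μr μl hr hl
end

section
/- The Heisenberg double H(O(H)) of a finite-dimensional Hopf algebra H acts faithfully on H^* via \psi \triangleright \varphi = \psi\varphi and h \triangleright \varphi = \varphi(? h), and consequently H(O(H)) is isomorphic as an algebra to End(H^*), the full matrix algebra of linear endomorphisms of H^*. -/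
open scoped TensorProduct
open TensorProduct

variable {k A : Type} [Field k] [Ring A] [HopfAlgebra k A]

lemma conv_add_left (φ φ' ψ : Module.Dual k A) :
    conv (φ + φ') ψ = conv φ ψ + conv φ' ψ := by
  simp [conv, TensorProduct.map_add_left, LinearMap.comp_add, LinearMap.add_comp]

lemma conv_add_right (φ ψ ψ' : Module.Dual k A) :
    conv φ (ψ + ψ') = conv φ ψ + conv φ ψ' := by
  simp [conv, TensorProduct.map_add_right, LinearMap.comp_add, LinearMap.add_comp]

lemma conv_smul_left (c : k) (φ ψ : Module.Dual k A) : conv (c • φ) ψ = c • conv φ ψ := by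
  simp [conv, TensorProduct.map_smul_left, LinearMap.comp_smul, LinearMap.smul_comp]

lemma conv_smul_right (c : k) (φ ψ : Module.Dual k A) : conv φ (c • ψ) = c • conv φ ψ := by
  simp [conv, TensorProduct.map_smul_right, LinearMap.comp_smul, LinearMap.smul_comp]

lemma comp_mulRight_add (φ : Module.Dual k A) (h h' : A) :
    φ ∘ₗ LinearMap.mulRight k (h + h')
      = φ ∘ₗ LinearMap.mulRight k h + φ ∘ₗ LinearMap.mulRight k h' :=
  LinearMap.ext fun x => by simp [mul_add]

lemma comp_mulRight_smul (φ : Module.Dual k A) (c : k) (h : A) :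
    φ ∘ₗ LinearMap.mulRight k (c • h) = c • (φ ∘ₗ LinearMap.mulRight k h) :=
  LinearMap.ext fun x => by simp [mul_smul_comm]

/-- The action of `ψ ⊗ h ∈ H(O(H)) = H* ⊗ H` on `H*`: `(ψ ⊗ h) ▷ φ = ψ · φ(? h)`. -/
noncomputable def heisOp (ψ : Module.Dual k A) (h : A) : Module.End k (Module.Dual k A) :=
  { toFun := fun φ => conv ψ (φ ∘ₗ LinearMap.mulRight k h)
    map_add' := fun φ φ' => by
      show conv ψ ((φ + φ') ∘ₗ LinearMap.mulRight k h) = _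
      rw [LinearMap.add_comp, conv_add_right]
    map_smul' := fun c φ => by
      show conv ψ ((c • φ) ∘ₗ LinearMap.mulRight k h)
        = c • conv ψ (φ ∘ₗ LinearMap.mulRight k h)
      rw [LinearMap.smul_comp, conv_smul_right] }

/-- The representation map `Φ : H(O(H)) = H* ⊗ H → End(H*)`. -/
noncomputable def heisRep : (Module.Dual k A) ⊗[k] A →ₗ[k] Module.End k (Module.Dual k A) :=
  TensorProduct.lift
    { toFun := fun ψ =>
        { toFun := fun h => heisOp ψ h
          map_add' := fun h h' => by
            refine LinearMap.ext fun φ => ?_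
            show conv ψ (φ ∘ₗ LinearMap.mulRight k (h + h'))
              = conv ψ (φ ∘ₗ LinearMap.mulRight k h) + conv ψ (φ ∘ₗ LinearMap.mulRight k h')
            rw [comp_mulRight_add, conv_add_right]
          map_smul' := fun c h => by
            refine LinearMap.ext fun φ => ?_
            show conv ψ (φ ∘ₗ LinearMap.mulRight k (c • h))
              = c • conv ψ (φ ∘ₗ LinearMap.mulRight k h)
            rw [comp_mulRight_smul, conv_smul_right] }
      map_add' := fun ψ ψ' => by
        refine LinearMap.ext fun h => LinearMap.ext fun φ => ?_
        show conv (ψ + ψ') (φ ∘ₗ LinearMap.mulRight k h)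
          = conv ψ (φ ∘ₗ LinearMap.mulRight k h) + conv ψ' (φ ∘ₗ LinearMap.mulRight k h)
        exact conv_add_left _ _ _
      map_smul' := fun c ψ => by
        refine LinearMap.ext fun h => LinearMap.ext fun φ => ?_
        show conv (c • ψ) (φ ∘ₗ LinearMap.mulRight k h)
          = c • conv ψ (φ ∘ₗ LinearMap.mulRight k h)
        exact conv_smul_left _ _ _ }

/-!
Write `L ψ = convMulLeft ψ` for left convolution by `ψ` on `H*` and `R h = rightTranslate h` for
`φ ↦ φ(? h)`, so that the representation is `ψ ⊗ h ↦ L ψ * R h`. Since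
`(L ψ * R h) φ = φ ∘ (x ↦ ∑ ψ(x₁) x₂ h)`, it factors as `H* ⊗ H ≅ End H → End H → End H*`, where
the last map is transposition and the middle one is `f ↦ (x ↦ ∑ x₂ f(x₁))`. Composing the middle
map with the antipode turns it into right convolution by `S` in `Hom(H, H)`, so it is injective as
soon as `S` is.

That `S` is injective for finite-dimensional `H` is the theorem of Larson and Sweedler. `H*` is a
Hopf module: the coaction is dual to convolution and `H` acts by `f ↼ h = R (S h) f`. Its
projection onto coinvariants, `P = ∑ᵢ R (S (S eᵢ)) * L eᵢ*`, produces a nonzero left integral `ℓ`,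
and `P (θ * (ℓ ↼ h)) = θ(h) ℓ`; so `S h = 0` forces `h = 0`. The Hopf-module law
`L η * R (S h) = ∑ R (S h₁) * L (η(? h₂))` follows formally, in the convolution algebra
`Hom(H, End H*)`, from the exchange rule `R h * L ψ = ∑ L (ψ(? h₁)) * R h₂`, which is just the
multiplicativity of the coproduct.
-/
open Coalgebra HopfAlgebra WithConv

section Convolution

variable {R C B : Type*} [CommSemiring R] [AddCommMonoid C] [Module R C] [Semiring B] [Algebra R B]

lemma LinearMap.mulLeft_comp_convMul [CoalgebraStruct R C] (z : B) (F G : WithConv (C →ₗ[R] B)) :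
    toConv (mulLeft R z ∘ₗ (F * G).ofConv) = toConv (mulLeft R z ∘ₗ F.ofConv) * G := by
  ext c
  simp [(ℛ R c).convMul_apply, mul_assoc]

lemma LinearMap.mulRight_comp_convMul [CoalgebraStruct R C] (z : B) (F G : WithConv (C →ₗ[R] B)) :
    toConv (mulRight R z ∘ₗ (F * G).ofConv) = F * toConv (mulRight R z ∘ₗ G.ofConv) := by
  ext c
  simp [(ℛ R c).convMul_apply, mul_assoc]

lemma LinearMap.mulRight_comp_convOne [Coalgebra R C] (z : B) :
    mulRight R z ∘ₗ (1 : WithConv (C →ₗ[R] B)).ofConv =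
      mulLeft R z ∘ₗ (1 : WithConv (C →ₗ[R] B)).ofConv := by
  ext c
  simp [Algebra.commutes]

end Convolution

section Antipode

variable {R H B : Type*} [CommSemiring R] [Semiring H] [HopfAlgebra R H] [Semiring B] [Algebra R B]

lemma AlgHom.comp_convOne (f : H →ₐ[R] B) :
    f.toLinearMap ∘ₗ (1 : WithConv (H →ₗ[R] H)).ofConv = (1 : WithConv (H →ₗ[R] B)).ofConv := by
  ext c
  simp

lemma AlgHom.comp_antipode_convMul (f : H →ₐ[R] B) :
    toConv (f.toLinearMap ∘ₗ antipode R) * toConv f.toLinearMap = 1 := by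
  have h := LinearMap.algHom_comp_convMul_distrib f (toConv (antipode R)) (toConv LinearMap.id)
  rw [LinearMap.antipode_mul_id, f.comp_convOne] at h
  exact WithConv.ofConv_injective h.symm

lemma AlgHom.convMul_comp_antipode (f : H →ₐ[R] B) :
    toConv f.toLinearMap * toConv (f.toLinearMap ∘ₗ antipode R) = 1 := by
  have h := LinearMap.algHom_comp_convMul_distrib f (toConv LinearMap.id) (toConv (antipode R))
  rw [LinearMap.id_mul_antipode, f.comp_convOne] at h
  exact WithConv.ofConv_injective h.symm

open Algebra.TensorProduct in
/-- Both sides are convolution inverses of `comul = includeLeft * includeRight`. -/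
theorem HopfAlgebra.comul_comp_antipode :
    comul ∘ₗ antipode R =
      map (antipode R) (antipode R) ∘ₗ (TensorProduct.comm R H H).toLinearMap ∘ₗ comul := by
  have hcomul : toConv (comul (R := R) (A := H)) =
      toConv (includeLeft : H →ₐ[R] H ⊗[R] H).toLinearMap *
        toConv (includeRight : H →ₐ[R] H ⊗[R] H).toLinearMap := by
    ext c
    simp [(ℛ R c).convMul_apply, ← (ℛ R c).eq]
  have hswap : toConv (map (antipode R) (antipode R) ∘ₗ (TensorProduct.comm R H H).toLinearMap ∘ₗ
      comul) = toConv ((includeRight : H →ₐ[R] H ⊗[R] H).toLinearMap ∘ₗ antipode R) *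
        toConv ((includeLeft : H →ₐ[R] H ⊗[R] H).toLinearMap ∘ₗ antipode R) := by
    ext c
    simp [(ℛ R c).convMul_apply, ← (ℛ R c).eq]
  refine WithConv.toConv_injective
    (left_inv_eq_right_inv ?_ (LinearMap.comul_right_inv (R := R) (C := H))).symm
  rw [hswap, hcomul, mul_assoc, ← mul_assoc (toConv (includeLeft.toLinearMap ∘ₗ _)),
    AlgHom.comp_antipode_convMul, one_mul, AlgHom.comp_antipode_convMul]

end Antipode

lemma Module.Basis.sum_coord_smul_apply {R M N ι : Type*} [CommSemiring R] [AddCommMonoid M]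
    [Module R M] [AddCommMonoid N] [Module R N] [Fintype ι] (e : Module.Basis ι R M)
    (f : M →ₗ[R] N) (x : M) : ∑ i, e.coord i x • f (e i) = f x := by
  simp_rw [Module.Basis.coord_apply, ← map_smul, ← map_sum, e.sum_repr]

lemma Module.Dual.transpose_bijective {K V : Type*} [Field K] [AddCommGroup V] [Module K V]
    [FiniteDimensional K V] :
    Function.Bijective (Module.Dual.transpose (R := K) : Module.End K V →ₗ[K] _) := by
  refine ⟨(injective_iff_map_eq_zero _).mpr fun u hu => LinearMap.ext fun x => ?_, fun w => ?_⟩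
  · refine (Module.forall_dual_apply_eq_zero_iff K (u x)).mp fun φ => ?_
    exact LinearMap.congr_fun (LinearMap.congr_fun hu φ) x
  · refine ⟨(Module.evalEquiv K V).symm.toLinearMap ∘ₗ Module.Dual.transpose w ∘ₗ
      Module.Dual.eval K V, LinearMap.ext fun φ => LinearMap.ext fun x => ?_⟩
    simp [Module.Dual.transpose_apply]

lemma conv_apply_repr (φ ψ : Module.Dual k A) {x : A} {ι : Type*} (r : Repr k x ι) :
    conv φ ψ x = ∑ i ∈ r.index, φ (r.left i) * ψ (r.right i) :=
  r.convMul_apply (toConv φ) (toConv ψ)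

lemma conv_assoc (φ ψ χ : Module.Dual k A) : conv (conv φ ψ) χ = conv φ (conv ψ χ) :=
  congrArg ofConv (mul_assoc (toConv φ) (toConv ψ) (toConv χ))

lemma counit_conv (φ : Module.Dual k A) : conv counit φ = φ :=
  congrArg ofConv (one_mul (toConv φ))

noncomputable def convMulLeft : Module.Dual k A →ₗ[k] Module.End k (Module.Dual k A) :=
  LinearMap.mk₂ k conv conv_add_left conv_smul_left conv_add_right conv_smul_right

noncomputable def rightTranslate : A →ₐ[k] Module.End k (Module.Dual k A) :=
  AlgHom.ofLinearMap (Module.Dual.transpose ∘ₗ (LinearMap.mul k A).flip)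
    (LinearMap.ext fun φ => LinearMap.ext fun x => congrArg φ (mul_one x))
    (fun a b => LinearMap.ext fun φ => LinearMap.ext fun x => congrArg φ (mul_assoc x a b).symm)

@[simp] lemma convMulLeft_apply (ψ φ : Module.Dual k A) : convMulLeft ψ φ = conv ψ φ := rfl

@[simp] lemma rightTranslate_apply (h : A) (φ : Module.Dual k A) (x : A) :
    rightTranslate h φ x = φ (x * h) := rfl

lemma convMulLeft_conv (ψ ψ' : Module.Dual k A) :
    convMulLeft (conv ψ ψ') = convMulLeft ψ * convMulLeft ψ' :=
  LinearMap.ext (conv_assoc ψ ψ')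

lemma convMulLeft_counit : convMulLeft (counit : Module.Dual k A) = 1 :=
  LinearMap.ext counit_conv

lemma heisRep_tmul (ψ : Module.Dual k A) (h : A) :
    heisRep (ψ ⊗ₜ[k] h) = convMulLeft ψ * rightTranslate h := rfl

lemma rightTranslate_mul_convMulLeft (ψ : Module.Dual k A) {h : A} {ι : Type*} (r : Repr k h ι) :
    rightTranslate h * convMulLeft ψ =
      ∑ j ∈ r.index, convMulLeft (rightTranslate (r.left j) ψ) * rightTranslate (r.right j) := by
  ext φ x
  simp only [Module.End.mul_apply, rightTranslate_apply, convMulLeft_apply, LinearMap.sum_apply]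
  rw [conv_apply_repr _ _ ((ℛ k x).mul r), Repr.mul_index, Finset.sum_product_right]
  refine Finset.sum_congr rfl fun j _ => ?_
  rw [conv_apply_repr _ _ (ℛ k x)]
  rfl

noncomputable def convMulLeftTranslate (η : Module.Dual k A) :
    A →ₗ[k] Module.End k (Module.Dual k A) :=
  convMulLeft ∘ₗ LinearMap.applyₗ η ∘ₗ rightTranslate.toLinearMap

lemma mulRight_convMulLeft_comp_rightTranslate (η : Module.Dual k A) :
    toConv (LinearMap.mulRight k (convMulLeft η) ∘ₗ rightTranslate.toLinearMap) =
      toConv (convMulLeftTranslate η) * toConv rightTranslate.toLinearMap := by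
  refine WithConv.ext (LinearMap.ext fun h => ?_)
  rw [(ℛ k h).convMul_apply]
  exact rightTranslate_mul_convMulLeft η (ℛ k h)

lemma mulLeft_convMulLeft_comp_rightTranslate_antipode (η : Module.Dual k A) :
    toConv (LinearMap.mulLeft k (convMulLeft η) ∘ₗ rightTranslate.toLinearMap ∘ₗ antipode k) =
      toConv (rightTranslate.toLinearMap ∘ₗ antipode k) * toConv (convMulLeftTranslate η) := by
  set R := rightTranslate (k := k) (A := A)
  -- `R ∘ S` is the convolution inverse of `R`, and a constant factor commutes with the unit `1`.
  have h : toConv (convMulLeftTranslate η) =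
      toConv (LinearMap.mulRight k (convMulLeft η) ∘ₗ R.toLinearMap) *
        toConv (R.toLinearMap ∘ₗ antipode k) := by
    rw [mulRight_convMulLeft_comp_rightTranslate, mul_assoc, R.convMul_comp_antipode, mul_one]
  rw [h, ← mul_assoc, ← LinearMap.mulRight_comp_convMul, R.comp_antipode_convMul,
    LinearMap.mulRight_comp_convOne, ← toConv_ofConv 1, ← LinearMap.mulLeft_comp_convMul, one_mul]

section Projector

variable {ι : Type*} [Fintype ι] (e : Module.Basis ι k A)

lemma comul_eq_sum_conv_coord (x : A) :
    comul (R := k) x = ∑ p, ∑ q, conv (e.coord p) (e.coord q) x • (e p ⊗ₜ[k] e q) := by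
  calc comul (R := k) x = ∑ t ∈ (ℛ k x).index, (ℛ k x).left t ⊗ₜ[k] (ℛ k x).right t :=
        (ℛ k x).eq.symm
    _ = ∑ t ∈ (ℛ k x).index, ∑ p, ∑ q,
          (e.coord p ((ℛ k x).left t) * e.coord q ((ℛ k x).right t)) • (e p ⊗ₜ[k] e q) := by
      refine Finset.sum_congr rfl fun t _ => ?_
      conv_lhs => rw [← e.sum_repr ((ℛ k x).left t), ← e.sum_repr ((ℛ k x).right t)]
      simp_rw [sum_tmul, tmul_sum, smul_tmul_smul, Module.Basis.coord_apply]
    _ = _ := by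
      simp_rw [conv_apply_repr _ _ (ℛ k x), Finset.sum_smul]
      rw [Finset.sum_comm]
      exact Finset.sum_congr rfl fun p _ => Finset.sum_comm

lemma convMulLeft_eq_sum_coord (ψ : Module.Dual k A) :
    convMulLeft ψ = ∑ i, ψ (e i) • convMulLeft (e.coord i) := by
  conv_lhs => rw [← e.sum_dual_apply_smul_coord ψ]
  simp only [map_sum, map_smul]

lemma sum_comul_mul_convMulLeft_coord (Y : A ⊗[k] A →ₗ[k] Module.End k (Module.Dual k A)) :
    ∑ i, Y (comul (e i)) * convMulLeft (e.coord i) =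
      ∑ p, ∑ q, Y (e p ⊗ₜ[k] e q) * (convMulLeft (e.coord p) * convMulLeft (e.coord q)) := by
  simp_rw [← convMulLeft_conv, convMulLeft_eq_sum_coord e (conv _ _), Finset.mul_sum,
    comul_eq_sum_conv_coord e, map_sum, map_smul, Finset.sum_mul, mul_smul_comm, smul_mul_assoc]
  rw [Finset.sum_comm]
  exact Finset.sum_congr rfl fun p _ => Finset.sum_comm

noncomputable def coinvariantProjector : Module.End k (Module.Dual k A) :=
  ∑ i, rightTranslate (antipode k (antipode k (e i))) * convMulLeft (e.coord i)

lemma sum_conv_rightTranslate_antipode_coord (η : Module.Dual k A) :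
    ∑ p, conv (rightTranslate (antipode k (e p)) η) (e.coord p) = η 1 • counit := by
  ext y
  simp only [LinearMap.sum_apply, conv_apply_repr _ _ (ℛ k y), rightTranslate_apply]
  rw [Finset.sum_comm]
  have hp : ∀ a b : A, ∑ p, η (a * antipode k (e p)) * e.coord p b = η (a * antipode k b) :=
    fun a b => by
      simpa [mul_comm] using e.sum_coord_smul_apply (η ∘ₗ LinearMap.mulLeft k a ∘ₗ antipode k) b
  rw [Finset.sum_congr rfl fun t _ => hp _ _, ← map_sum, sum_mul_antipode_eq_smul (ℛ k y)]
  simp [mul_comm]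

lemma convMulLeft_mul_coinvariantProjector (η : Module.Dual k A) :
    convMulLeft η * coinvariantProjector e = η 1 • coinvariantProjector e := by
  let Y : A ⊗[k] A →ₗ[k] Module.End k (Module.Dual k A) :=
    LinearMap.mul' k _ ∘ₗ map (rightTranslate.toLinearMap ∘ₗ antipode k) (convMulLeftTranslate η) ∘ₗ
      map (antipode k) (antipode k) ∘ₗ (TensorProduct.comm k A A).toLinearMap
  have step (x : A) :
      convMulLeft η * rightTranslate (antipode k (antipode k x)) = Y (comul x) := by
    have h := congrArg (fun F => F.ofConv (antipode k x))
      (mulLeft_convMulLeft_comp_rightTranslate_antipode η)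
    have hS : comul (antipode k x) =
        map (antipode k) (antipode k) (TensorProduct.comm k A A (comul x)) :=
      LinearMap.congr_fun comul_comp_antipode x
    simp only [LinearMap.convMul_apply, hS] at h
    exact h
  calc convMulLeft η * coinvariantProjector e
      = ∑ i, Y (comul (e i)) * convMulLeft (e.coord i) := by
        simp_rw [coinvariantProjector, Finset.mul_sum, ← mul_assoc, step]
    _ = ∑ p, ∑ q, Y (e p ⊗ₜ[k] e q) * (convMulLeft (e.coord p) * convMulLeft (e.coord q)) :=
        sum_comul_mul_convMulLeft_coord e Y
    _ = ∑ q, rightTranslate (antipode k (antipode k (e q))) *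
          convMulLeft (∑ p, conv (rightTranslate (antipode k (e p)) η) (e.coord p)) *
            convMulLeft (e.coord q) := by
        rw [Finset.sum_comm]
        simp [Y, convMulLeftTranslate, convMulLeft_conv, Finset.mul_sum, Finset.sum_mul, mul_assoc]
    _ = η 1 • coinvariantProjector e := by
        simp [sum_conv_rightTranslate_antipode_coord, convMulLeft_counit, coinvariantProjector,
          Finset.smul_sum]

lemma sum_rightTranslate_antipode_mul_coinvariantProjector_mul :
    ∑ i, rightTranslate (antipode k (e i)) * coinvariantProjector e * convMulLeft (e.coord i) =
      1 := by
  let Y : A ⊗[k] A →ₗ[k] Module.End k (Module.Dual k A) :=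
    rightTranslate.toLinearMap ∘ₗ antipode k ∘ₗ LinearMap.mul' k A ∘ₗ (antipode k).rTensor A
  have hY (x : A) : Y (comul x) = counit (R := k) x • 1 := by
    simp [Y, mul_antipode_rTensor_comul_apply, Algebra.algebraMap_eq_smul_one]
  calc ∑ i, rightTranslate (antipode k (e i)) * coinvariantProjector e * convMulLeft (e.coord i)
      = ∑ p, ∑ q, Y (e p ⊗ₜ[k] e q) * (convMulLeft (e.coord p) * convMulLeft (e.coord q)) := by
        rw [Finset.sum_comm]
        simp [Y, coinvariantProjector, Finset.mul_sum, Finset.sum_mul, antipode_mul_antidistrib,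
          mul_assoc]
    _ = ∑ i, Y (comul (e i)) * convMulLeft (e.coord i) :=
        (sum_comul_mul_convMulLeft_coord e Y).symm
    _ = 1 := by
        simp only [hY, smul_mul_assoc, one_mul]
        rw [← convMulLeft_eq_sum_coord, convMulLeft_counit]

end Projector

def IsLeftIntegral (ℓ : Module.Dual k A) : Prop :=
  ∀ η : Module.Dual k A, conv η ℓ = η 1 • ℓ

lemma isLeftIntegral_coinvariantProjector_apply {ι : Type*} [Fintype ι] (e : Module.Basis ι k A)
    (m : Module.Dual k A) : IsLeftIntegral (coinvariantProjector e m) :=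
  fun η => LinearMap.congr_fun (convMulLeft_mul_coinvariantProjector e η) m

lemma exists_isLeftIntegral_ne_zero [FiniteDimensional k A] :
    ∃ ℓ : Module.Dual k A, IsLeftIntegral ℓ ∧ ℓ ≠ 0 := by
  by_contra! h
  let e := Module.finBasis k A
  have hP : coinvariantProjector e = 0 :=
    LinearMap.ext fun m => h _ (isLeftIntegral_coinvariantProjector_apply e m)
  have h1 := LinearMap.congr_fun (LinearMap.congr_fun
    (sum_rightTranslate_antipode_mul_coinvariantProjector_mul e) counit) 1
  simp [hP] at h1

namespace IsLeftIntegral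

variable {ℓ : Module.Dual k A} (hℓ : IsLeftIntegral ℓ)
include hℓ

lemma conv_rightTranslate_antipode (θ : Module.Dual k A) {h : A} {ι : Type*} (r : Repr k h ι) :
    conv θ (rightTranslate (antipode k h) ℓ) =
      ∑ t ∈ r.index, θ (r.right t) • rightTranslate (antipode k (r.left t)) ℓ := by
  have H := congrArg (fun F => F.ofConv h) (mulLeft_convMulLeft_comp_rightTranslate_antipode θ)
  simp only [LinearMap.comp_apply, r.convMul_apply] at H
  simpa [convMulLeftTranslate, hℓ _] using LinearMap.congr_fun H ℓ

lemma coinvariantProjector_rightTranslate_antipode {ι : Type*} [Fintype ι]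
    (e : Module.Basis ι k A) (a : A) :
    coinvariantProjector e (rightTranslate (antipode k a) ℓ) = counit (R := k) a • ℓ := by
  have hsum (b : A) (c : Module.Dual k A) :
      ∑ i, e.coord i b • rightTranslate (antipode k (antipode k (e i))) c =
        rightTranslate (antipode k (antipode k b)) c := by
    simpa using e.sum_coord_smul_apply
      (LinearMap.applyₗ c ∘ₗ rightTranslate.toLinearMap ∘ₗ antipode k ∘ₗ antipode k) b
  calc coinvariantProjector e (rightTranslate (antipode k a) ℓ)
      = ∑ i, rightTranslate (antipode k (antipode k (e i)))
          (∑ t ∈ (ℛ k a).index, e.coord i ((ℛ k a).right t) •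
            rightTranslate (antipode k ((ℛ k a).left t)) ℓ) := by
        simp only [coinvariantProjector, LinearMap.sum_apply, Module.End.mul_apply,
          convMulLeft_apply, hℓ.conv_rightTranslate_antipode _ (ℛ k a)]
    _ = ∑ t ∈ (ℛ k a).index, rightTranslate (antipode k (antipode k ((ℛ k a).right t)))
          (rightTranslate (antipode k ((ℛ k a).left t)) ℓ) := by
        simp only [map_sum, map_smul]
        rw [Finset.sum_comm]
        exact Finset.sum_congr rfl fun t _ => hsum _ _
    _ = rightTranslate (antipode k (∑ t ∈ (ℛ k a).index,
          (ℛ k a).left t * antipode k ((ℛ k a).right t))) ℓ := by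
        simp only [map_sum, LinearMap.sum_apply, antipode_mul_antidistrib, map_mul,
          Module.End.mul_apply]
    _ = counit (R := k) a • ℓ := by
        simp [sum_mul_antipode_eq_smul (ℛ k a)]

lemma coinvariantProjector_conv_rightTranslate_antipode {ι : Type*} [Fintype ι]
    (e : Module.Basis ι k A) (θ : Module.Dual k A) (h : A) :
    coinvariantProjector e (conv θ (rightTranslate (antipode k h) ℓ)) = θ h • ℓ := by
  rw [hℓ.conv_rightTranslate_antipode θ (ℛ k h)]
  simp only [map_sum, map_smul, hℓ.coinvariantProjector_rightTranslate_antipode, smul_smul]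
  rw [← Finset.sum_smul]
  congr 1
  conv_rhs => rw [← sum_counit_smul (ℛ k h)]
  simp [mul_comm]

end IsLeftIntegral

lemma antipode_injective [FiniteDimensional k A] :
    Function.Injective (antipode k : A →ₗ[k] A) := by
  obtain ⟨ℓ, hℓ, hne⟩ := exists_isLeftIntegral_ne_zero (k := k) (A := A)
  rw [← LinearMap.ker_eq_bot, LinearMap.ker_eq_bot']
  intro h hh
  refine (Module.forall_dual_apply_eq_zero_iff k h).mp fun θ => ?_
  have := hℓ.coinvariantProjector_conv_rightTranslate_antipode (Module.finBasis k A) θ h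
  rw [hh, map_zero, LinearMap.zero_apply, ← convMulLeft_apply, map_zero, map_zero] at this
  exact (smul_eq_zero.mp this.symm).resolve_right hne

/-- `f ↦ f * id` in the convolution algebra `Hom(H, Hᵐᵒᵖ)`, i.e. `x ↦ ∑ x₂ f(x₁)`. -/
noncomputable def opConvId : Module.End k A →ₗ[k] Module.End k A where
  toFun f := LinearMap.mul' k A ∘ₗ (TensorProduct.comm k A A).toLinearMap ∘ₗ f.rTensor A ∘ₗ comul
  map_add' f g := by simp [LinearMap.rTensor_add, LinearMap.comp_add, LinearMap.add_comp]
  map_smul' c f := by simp [LinearMap.rTensor_smul, LinearMap.comp_smul, LinearMap.smul_comp]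

lemma opConvId_apply_repr (f : Module.End k A) {x : A} {ι : Type*} (r : Repr k x ι) :
    opConvId f x = ∑ t ∈ r.index, r.right t * f (r.left t) := by
  simp [opConvId, ← r.eq, map_sum]

lemma antipode_comp_opConvId (f : Module.End k A) :
    toConv (antipode k ∘ₗ opConvId f) = toConv (antipode k ∘ₗ f) * toConv (antipode k) := by
  refine WithConv.ext (LinearMap.ext fun x => ?_)
  simp [opConvId_apply_repr f (ℛ k x), (ℛ k x).convMul_apply, antipode_mul_antidistrib]

lemma opConvId_injective (hS : Function.Injective (antipode k : A →ₗ[k] A)) :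
    Function.Injective (opConvId (k := k) (A := A)) := by
  refine (injective_iff_map_eq_zero _).mpr fun f hf => ?_
  have h : toConv (antipode k ∘ₗ f) = 0 := by
    rw [← mul_one (toConv (antipode k ∘ₗ f)), ← LinearMap.antipode_mul_id, ← mul_assoc,
      ← antipode_comp_opConvId, hf, LinearMap.comp_zero, toConv_zero, zero_mul]
  ext x
  exact hS (by simpa using LinearMap.congr_fun (WithConv.toConv_injective h) x)

lemma opConvId_bijective [FiniteDimensional k A] :
    Function.Bijective (opConvId (k := k) (A := A)) :=
  have hinj := opConvId_injective antipode_injective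
  ⟨hinj, LinearMap.injective_iff_surjective.mp hinj⟩

lemma heisRep_eq_transpose_comp :
    heisRep = Module.Dual.transpose ∘ₗ opConvId ∘ₗ dualTensorHom k A A := by
  refine TensorProduct.ext' fun ψ h => LinearMap.ext fun φ => LinearMap.ext fun x => ?_
  simp [heisRep_tmul, conv_apply_repr _ _ (ℛ k x), opConvId_apply_repr _ (ℛ k x),
    Module.Dual.transpose_apply, map_sum]

/-- The Heisenberg double `H(O(H))` acts faithfully on `H*` via
`ψ ▷ φ = ψφ` and `h ▷ φ = φ(?h)`, and is isomorphic as an algebra to `End(H*)`: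
the representation map `Φ` is bijective, restricts on the two tensor factors to the
convolution action of `O(H)` and the right-translation action of `H`, and satisfies
the Heisenberg exchange rule `hψ = ψ(?h')h''`. -/
theorem heisenberg_double_is_matrix_algebra [FiniteDimensional k A] :
    Function.Bijective (heisRep (k := k) (A := A))
    ∧ (∀ (ψ φ : Module.Dual k A), heisRep (ψ ⊗ₜ[k] (1 : A)) φ = conv ψ φ)
    ∧ (∀ (h : A) (φ : Module.Dual k A),
        heisRep ((Coalgebra.counit (R := k) : Module.Dual k A) ⊗ₜ[k] h) φ
          = φ ∘ₗ LinearMap.mulRight k h)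
    ∧ (∀ (h : A) (ψ : Module.Dual k A) (ι : Type) (s : Finset ι) (h1 h2 : ι → A),
        Coalgebra.comul (R := k) h = ∑ j ∈ s, h1 j ⊗ₜ[k] h2 j →
        heisRep ((Coalgebra.counit (R := k) : Module.Dual k A) ⊗ₜ[k] h)
            * heisRep (ψ ⊗ₜ[k] (1 : A))
          = ∑ j ∈ s, heisRep ((ψ ∘ₗ LinearMap.mulRight k (h1 j)) ⊗ₜ[k] h2 j)) := by
  refine ⟨?_, fun ψ φ => ?_, fun h φ => ?_, fun h ψ ι s h1 h2 hcomul => ?_⟩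
  · rw [heisRep_eq_transpose_comp, LinearMap.coe_comp, LinearMap.coe_comp]
    exact Module.Dual.transpose_bijective.comp
      (opConvId_bijective.comp (dualTensorHom_bijective ..))
  · rw [heisRep_tmul, map_one, mul_one]
    rfl
  · rw [heisRep_tmul, convMulLeft_counit, one_mul]
    rfl
  · simp only [heisRep_tmul, convMulLeft_counit, one_mul, map_one, mul_one]
    exact rightTranslate_mul_convMulLeft ψ ⟨s, h1, h2, hcomul.symm⟩
end

section
/- In a quasitriangular Hopf algebra with R = \sum_i a_i \otimes b_i and RR' = \sum_i X_i \otimes Y_i, the coproduct of the second leg of RR' satisfies: \sum_i X_i \otimes Y_i' \otimes Y_i'' = \sum_{i,j,k} a_j X_i b_k \otimes Y_i \otimes b_j a_k. -/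
open scoped TensorProduct
open TensorProduct

variable {k A : Type} [Field k] [Ring A] [HopfAlgebra k A]

/-!
Apply the algebra map `id ⊗ Δ` to `RR' = R · R'`. The hexagon axiom `(id ⊗ Δ)(R) = R₁₃R₁₂` is one
factor; flipping the other one, `(Δ ⊗ id)(R) = R₁₃R₂₃`, gives `(id ⊗ Δ)(R') = R'₁₂R'₁₃`. Regrouping,
`(id ⊗ Δ)(RR') = R₁₃ (RR')₁₂ R'₁₃`, and expanding the three sums is the formula.
-/

section TensorLegs

open Algebra.TensorProduct

variable {R B C D : Type*} [CommSemiring R] [Semiring B] [Semiring C] [Semiring D]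
  [Algebra R B] [Algebra R C] [Algebra R D]

theorem map_id_includeLeft_sum_tmul {ι : Type*} [Fintype ι] (x : ι → B) (y : ι → C) :
    map (AlgHom.id R B) (includeLeft : C →ₐ[R] C ⊗[R] D) (∑ i, x i ⊗ₜ[R] y i)
      = ∑ i, x i ⊗ₜ[R] (y i ⊗ₜ[R] (1 : D)) := by
  simp [map_sum]

theorem sum_tmul_one_tmul_mul_sum_tmul_tmul_one_mul_sum_tmul_one_tmul
    {ι κ μ : Type*} [Fintype ι] [Fintype κ] [Fintype μ]
    (u : ι → B) (v : ι → D) (x : κ → B) (y : κ → C) (w : μ → B) (z : μ → D) :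
    (∑ j, u j ⊗ₜ[R] ((1 : C) ⊗ₜ[R] v j)) * (∑ i, x i ⊗ₜ[R] (y i ⊗ₜ[R] (1 : D)))
        * (∑ l, w l ⊗ₜ[R] ((1 : C) ⊗ₜ[R] z l))
      = ∑ i, ∑ j, ∑ l, (u j * x i * w l) ⊗ₜ[R] (y i ⊗ₜ[R] (v j * z l)) := by
  simp only [Finset.sum_mul, Finset.mul_sum, tmul_mul_tmul, one_mul, mul_one]
  rw [Finset.sum_comm]
  exact Finset.sum_congr rfl fun _ _ => Finset.sum_comm

end TensorLegs

section Bialgebra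

open Algebra.TensorProduct

variable {R B C : Type*} [CommSemiring R] [Semiring B] [Semiring C] [Bialgebra R B] [Algebra R C]

theorem map_id_comulAlgHom_sum_tmul {ι : Type*} [Fintype ι] (u : ι → C) (v : ι → B) :
    map (AlgHom.id R C) (Bialgebra.comulAlgHom R B) (∑ i, u i ⊗ₜ[R] v i)
      = ∑ i, u i ⊗ₜ[R] Coalgebra.comul (R := R) (v i) := by
  simp [map_sum]

theorem sum_tmul_comul_eq_of_sum_comul_tmul_eq {ι : Type*} [Fintype ι] (a : ι → B) (b : ι → C)
    (h : (∑ i, Coalgebra.comul (R := R) (a i) ⊗ₜ[R] b i : (B ⊗[R] B) ⊗[R] C)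
      = (∑ i, (a i ⊗ₜ[R] (1 : B)) ⊗ₜ[R] b i) * (∑ i, ((1 : B) ⊗ₜ[R] a i) ⊗ₜ[R] b i)) :
    (∑ i, b i ⊗ₜ[R] Coalgebra.comul (R := R) (a i) : C ⊗[R] (B ⊗[R] B))
      = (∑ i, b i ⊗ₜ[R] (a i ⊗ₜ[R] (1 : B))) * (∑ i, b i ⊗ₜ[R] ((1 : B) ⊗ₜ[R] a i)) := by
  simpa [map_sum, map_mul] using congrArg (Algebra.TensorProduct.comm R (B ⊗[R] B) C) h

end Bialgebra

theorem comul_second_leg_of_RRp_general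
    (ι : Type) [Fintype ι] (a b : ι → A)
    (hex1 : (∑ i, (Coalgebra.comul (R := k) (a i)) ⊗ₜ[k] b i : (A ⊗[k] A) ⊗[k] A)
        = (∑ i, (a i ⊗ₜ[k] (1:A)) ⊗ₜ[k] b i) * (∑ i, ((1:A) ⊗ₜ[k] a i) ⊗ₜ[k] b i))
    (hex2 : (∑ i, a i ⊗ₜ[k] (Coalgebra.comul (R := k) (b i)) : A ⊗[k] (A ⊗[k] A))
        = (∑ i, a i ⊗ₜ[k] ((1:A) ⊗ₜ[k] b i)) * (∑ i, a i ⊗ₜ[k] (b i ⊗ₜ[k] (1:A))))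
    (κ : Type) [Fintype κ] (X Y : κ → A)
    (hXY : (∑ i, X i ⊗ₜ[k] Y i) = (∑ i, a i ⊗ₜ[k] b i) * (∑ i, b i ⊗ₜ[k] a i)) :
    (∑ i, X i ⊗ₜ[k] (Coalgebra.comul (R := k) (Y i)) : A ⊗[k] (A ⊗[k] A))
      = ∑ i, ∑ j, ∑ l, (a j * X i * b l) ⊗ₜ[k] ((Y i) ⊗ₜ[k] (b j * a l)) := by
  let idComul := Algebra.TensorProduct.map (AlgHom.id k A) (Bialgebra.comulAlgHom k A)
  have hRRp₁₂ := congrArg (Algebra.TensorProduct.map (AlgHom.id k A)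
    (Algebra.TensorProduct.includeLeft : A →ₐ[k] A ⊗[k] A)) hXY
  simp only [map_mul, map_id_includeLeft_sum_tmul] at hRRp₁₂
  calc (∑ i, X i ⊗ₜ[k] Coalgebra.comul (R := k) (Y i) : A ⊗[k] (A ⊗[k] A))
      = idComul (∑ i, a i ⊗ₜ[k] b i) * idComul (∑ i, b i ⊗ₜ[k] a i) := by
        rw [← map_mul, ← hXY, map_id_comulAlgHom_sum_tmul]
    _ = (∑ j, a j ⊗ₜ[k] ((1:A) ⊗ₜ[k] b j)) * (∑ i, X i ⊗ₜ[k] (Y i ⊗ₜ[k] (1:A)))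
          * (∑ l, b l ⊗ₜ[k] ((1:A) ⊗ₜ[k] a l)) := by
        rw [map_id_comulAlgHom_sum_tmul, map_id_comulAlgHom_sum_tmul, hex2,
          sum_tmul_comul_eq_of_sum_comul_tmul_eq a b hex1, hRRp₁₂]
        simp only [mul_assoc]
    _ = _ := sum_tmul_one_tmul_mul_sum_tmul_tmul_one_mul_sum_tmul_one_tmul _ _ _ _ _ _

/-- In a quasitriangular Hopf algebra with `R = ∑ aᵢ ⊗ bᵢ` and
`RR' = ∑ Xᵢ ⊗ Yᵢ`, one has `∑ Xᵢ ⊗ Yᵢ' ⊗ Yᵢ'' = ∑ aⱼXᵢb_l ⊗ Yᵢ ⊗ bⱼa_l`. -/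
theorem comul_second_leg_of_RRp
    (ι : Type) [Fintype ι] (a b : ι → A)
    (hRunit : IsUnit (∑ i, a i ⊗ₜ[k] b i))
    (hIntertwine : ∀ x : A, (∑ i, a i ⊗ₜ[k] b i) * Coalgebra.comul x
        = (TensorProduct.comm k A A) (Coalgebra.comul x) * (∑ i, a i ⊗ₜ[k] b i))
    (hex1 : (∑ i, (Coalgebra.comul (R := k) (a i)) ⊗ₜ[k] b i : (A ⊗[k] A) ⊗[k] A)
        = (∑ i, (a i ⊗ₜ[k] (1:A)) ⊗ₜ[k] b i) * (∑ i, ((1:A) ⊗ₜ[k] a i) ⊗ₜ[k] b i))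
    (hex2 : (∑ i, a i ⊗ₜ[k] (Coalgebra.comul (R := k) (b i)) : A ⊗[k] (A ⊗[k] A))
        = (∑ i, a i ⊗ₜ[k] ((1:A) ⊗ₜ[k] b i)) * (∑ i, a i ⊗ₜ[k] (b i ⊗ₜ[k] (1:A))))
    (κ : Type) [Fintype κ] (X Y : κ → A)
    (hXY : (∑ i, X i ⊗ₜ[k] Y i) = (∑ i, a i ⊗ₜ[k] b i) * (∑ i, b i ⊗ₜ[k] a i)) :
    (∑ i, X i ⊗ₜ[k] (Coalgebra.comul (R := k) (Y i)) : A ⊗[k] (A ⊗[k] A))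
      = ∑ i, ∑ j, ∑ l, (a j * X i * b l) ⊗ₜ[k] ((Y i) ⊗ₜ[k] (b j * a l)) :=
  comul_second_leg_of_RRp_general ι a b hex1 hex2 κ X Y hXY
end

section
/- Let H be a finite-dimensional ribbon Hopf algebra and K = H^* the coend of mod_l(H), with coadjoint action h \cdot \varphi = \varphi(S(h') ? h'') and multiplication m_K(\varphi \otimes \psi) = \varphi(a_j ? a_i) \star \psi(S(b_i) b_j ?) (\star the convolution product of H^*), unit \varepsilon, and counit \varepsilon_K(\varphi) = \varphi(1). Then the right integral \mu^r on H is a two-sided cointegral for K: m_K(\mu^r \otimes \varphi) = m_K(\varphi \otimes \mu^r) = \varphi(1)\mu^r for all \varphi \in H^*. -/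
/-!
Write `R = ∑ aᵢ ⊗ bᵢ`. The hexagon relations and the invertibility of `R` give
`R⁻¹ = (S ⊗ id) R` and `(S ⊗ S) R = R`. The twisted trace property `μʳ(xy) = μʳ(S²(y) x)` moves
the outer `R`-factor of `m_K` next to the inner one: for `m_K(μʳ ⊗ φ)` they combine to
`(S² ⊗ S)(R) · R = R⁻¹ R = 1`, for `m_K(φ ⊗ μʳ)` to `R · Δh · (id ⊗ S⁻¹)(R) = Δᵒᵖh · R R⁻¹`.
Either way `m_K` collapses to the convolution `μʳ ⋆ φ = φ(1) μʳ`.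
-/

open scoped TensorProduct
open TensorProduct

variable {k A : Type} [Field k] [Ring A] [HopfAlgebra k A]

theorem map_inv_eq_mul_rev {M N F : Type*} [Monoid M] [Monoid N] [FunLike F M N]
    [MonoidHomClass F M N] {f g g' : F} (u : Mˣ) (h : f u = g u * g' u) :
    f ↑u⁻¹ = g' ↑u⁻¹ * g ↑u⁻¹ := by
  have hu : Units.map (f : M →* N) u = Units.map (g : M →* N) u * Units.map (g' : M →* N) u :=
    Units.ext h
  simpa [mul_inv_rev] using congrArg (fun v : Nˣ => (↑v⁻¹ : N)) hu

section RMatrix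

variable {R H ι : Type*} [CommSemiring R] [Semiring H] [HopfAlgebra R H] [Fintype ι]

noncomputable def counitTensorId : H ⊗[R] H →ₐ[R] H :=
  (Algebra.TensorProduct.lid R H).toAlgHom.comp
    (Algebra.TensorProduct.map (Bialgebra.counitAlgHom R H) (AlgHom.id R H))

theorem counitTensorId_tmul (x y : H) :
    counitTensorId (R := R) (x ⊗ₜ[R] y) = algebraMap R H (Coalgebra.counit x) * y := by
  simp [counitTensorId, Algebra.smul_def]

theorem counitTensorId_comul (x : H) : counitTensorId (Coalgebra.comul (R := R) x) = x := by
  have : (counitTensorId (R := R) (H := H)).toLinearMap =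
      (TensorProduct.lid R H).toLinearMap ∘ₗ Coalgebra.counit.rTensor H := by
    ext; simp [counitTensorId_tmul, Algebra.smul_def]
  rw [← AlgHom.toLinearMap_apply, this, LinearMap.comp_apply, Coalgebra.rTensor_counit_comul]
  simp

variable {a b : ι → H}

local notation "S" => HopfAlgebra.antipode R

theorem sum_algebraMap_counit_tmul_eq_one (hr : IsUnit (∑ i, a i ⊗ₜ[R] b i))
    (hex1 : (∑ i, (Coalgebra.comul (R := R) (a i)) ⊗ₜ[R] b i : (H ⊗[R] H) ⊗[R] H)
        = (∑ i, (a i ⊗ₜ[R] (1:H)) ⊗ₜ[R] b i) * (∑ i, ((1:H) ⊗ₜ[R] a i) ⊗ₜ[R] b i)) :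
    ∑ i, algebraMap R H (Coalgebra.counit (a i)) ⊗ₜ[R] b i = 1 := by
  have h := congrArg (Algebra.TensorProduct.map counitTensorId (AlgHom.id R H)) hex1
  simp only [map_sum, map_mul, Algebra.TensorProduct.map_tmul, counitTensorId_comul,
    counitTensorId_tmul, AlgHom.coe_id, id_eq, Bialgebra.counit_one, map_one, one_mul,
    mul_one] at h
  exact hr.mul_eq_right.mp h.symm

theorem sum_tmul_algebraMap_counit_eq_one (hr : IsUnit (∑ i, a i ⊗ₜ[R] b i))
    (hex2 : (∑ i, a i ⊗ₜ[R] (Coalgebra.comul (R := R) (b i)) : H ⊗[R] (H ⊗[R] H))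
        = (∑ i, a i ⊗ₜ[R] ((1:H) ⊗ₜ[R] b i)) * (∑ i, a i ⊗ₜ[R] (b i ⊗ₜ[R] (1:H)))) :
    ∑ i, a i ⊗ₜ[R] algebraMap R H (Coalgebra.counit (b i)) = 1 := by
  have h := congrArg (Algebra.TensorProduct.map (AlgHom.id R H) counitTensorId) hex2
  simp only [map_sum, map_mul, Algebra.TensorProduct.map_tmul, counitTensorId_comul,
    counitTensorId_tmul, AlgHom.coe_id, id_eq, Bialgebra.counit_one, map_one, one_mul,
    mul_one] at h
  exact hr.mul_eq_left.mp h.symm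

theorem sum_antipode_tmul_mul_eq_one_s14 (hr : IsUnit (∑ i, a i ⊗ₜ[R] b i))
    (hex1 : (∑ i, (Coalgebra.comul (R := R) (a i)) ⊗ₜ[R] b i : (H ⊗[R] H) ⊗[R] H)
        = (∑ i, (a i ⊗ₜ[R] (1:H)) ⊗ₜ[R] b i) * (∑ i, ((1:H) ⊗ₜ[R] a i) ⊗ₜ[R] b i)) :
    (∑ i, S (a i) ⊗ₜ[R] b i) * (∑ i, a i ⊗ₜ[R] b i) = 1 := by
  have h := congrArg ((LinearMap.mul' R H ∘ₗ LinearMap.rTensor H S).rTensor H) hex1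
  rw [Finset.sum_mul_sum] at h
  simp only [map_sum, LinearMap.rTensor_tmul, LinearMap.comp_apply,
    HopfAlgebra.mul_antipode_rTensor_comul_apply, Algebra.TensorProduct.tmul_mul_tmul,
    LinearMap.mul'_apply, mul_one, one_mul] at h
  rw [Finset.sum_mul_sum, ← sum_algebraMap_counit_tmul_eq_one hr hex1, h]
  simp only [Algebra.TensorProduct.tmul_mul_tmul]

theorem sum_antipode_tmul_eq_inv (hr : IsUnit (∑ i, a i ⊗ₜ[R] b i))
    (hex1 : (∑ i, (Coalgebra.comul (R := R) (a i)) ⊗ₜ[R] b i : (H ⊗[R] H) ⊗[R] H)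
        = (∑ i, (a i ⊗ₜ[R] (1:H)) ⊗ₜ[R] b i) * (∑ i, ((1:H) ⊗ₜ[R] a i) ⊗ₜ[R] b i)) :
    ∑ i, S (a i) ⊗ₜ[R] b i = ↑hr.unit⁻¹ :=
  (Units.inv_eq_of_mul_eq_one_left (sum_antipode_tmul_mul_eq_one_s14 hr hex1)).symm

-- `(id ⊗ Δ)(R⁻¹) = R₁₂⁻¹ R₁₃⁻¹`, the inverse of the second hexagon relation.
theorem sum_antipode_tmul_comul (hr : IsUnit (∑ i, a i ⊗ₜ[R] b i))
    (hex1 : (∑ i, (Coalgebra.comul (R := R) (a i)) ⊗ₜ[R] b i : (H ⊗[R] H) ⊗[R] H)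
        = (∑ i, (a i ⊗ₜ[R] (1:H)) ⊗ₜ[R] b i) * (∑ i, ((1:H) ⊗ₜ[R] a i) ⊗ₜ[R] b i))
    (hex2 : (∑ i, a i ⊗ₜ[R] (Coalgebra.comul (R := R) (b i)) : H ⊗[R] (H ⊗[R] H))
        = (∑ i, a i ⊗ₜ[R] ((1:H) ⊗ₜ[R] b i)) * (∑ i, a i ⊗ₜ[R] (b i ⊗ₜ[R] (1:H)))) :
    (∑ i, S (a i) ⊗ₜ[R] (Coalgebra.comul (R := R) (b i)) : H ⊗[R] (H ⊗[R] H))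
      = (∑ i, S (a i) ⊗ₜ[R] (b i ⊗ₜ[R] (1:H))) * (∑ i, S (a i) ⊗ₜ[R] ((1:H) ⊗ₜ[R] b i)) := by
  let idComul : H ⊗[R] H →ₐ[R] H ⊗[R] (H ⊗[R] H) :=
    Algebra.TensorProduct.map (AlgHom.id R H) (Bialgebra.comulAlgHom R H)
  let incl₁₂ : H ⊗[R] H →ₐ[R] H ⊗[R] (H ⊗[R] H) :=
    Algebra.TensorProduct.map (AlgHom.id R H) Algebra.TensorProduct.includeLeft
  let incl₁₃ : H ⊗[R] H →ₐ[R] H ⊗[R] (H ⊗[R] H) :=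
    Algebra.TensorProduct.map (AlgHom.id R H) Algebra.TensorProduct.includeRight
  have h := map_inv_eq_mul_rev (f := idComul) (g := incl₁₃) (g' := incl₁₂) hr.unit (by
    simpa [idComul, incl₁₂, incl₁₃, map_sum] using hex2)
  rw [← sum_antipode_tmul_eq_inv hr hex1] at h
  simpa [idComul, incl₁₂, incl₁₃, map_sum] using h

theorem sum_antipode_tmul_antipode (hr : IsUnit (∑ i, a i ⊗ₜ[R] b i))
    (hex1 : (∑ i, (Coalgebra.comul (R := R) (a i)) ⊗ₜ[R] b i : (H ⊗[R] H) ⊗[R] H)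
        = (∑ i, (a i ⊗ₜ[R] (1:H)) ⊗ₜ[R] b i) * (∑ i, ((1:H) ⊗ₜ[R] a i) ⊗ₜ[R] b i))
    (hex2 : (∑ i, a i ⊗ₜ[R] (Coalgebra.comul (R := R) (b i)) : H ⊗[R] (H ⊗[R] H))
        = (∑ i, a i ⊗ₜ[R] ((1:H) ⊗ₜ[R] b i)) * (∑ i, a i ⊗ₜ[R] (b i ⊗ₜ[R] (1:H)))) :
    ∑ i, S (a i) ⊗ₜ[R] S (b i) = ∑ i, a i ⊗ₜ[R] b i := by
  have h := congrArg (LinearMap.lTensor H (LinearMap.mul' R H ∘ₗ LinearMap.lTensor H S))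
    (sum_antipode_tmul_comul hr hex1 hex2)
  rw [Finset.sum_mul_sum] at h
  simp only [map_sum, LinearMap.lTensor_tmul, LinearMap.comp_apply,
    HopfAlgebra.mul_antipode_lTensor_comul_apply, Algebra.TensorProduct.tmul_mul_tmul,
    LinearMap.mul'_apply, mul_one, one_mul] at h
  have hinv : (∑ i, S (a i) ⊗ₜ[R] b i) * ∑ i, S (a i) ⊗ₜ[R] S (b i) = 1 := by
    rw [Finset.sum_mul_sum]
    simp only [Algebra.TensorProduct.tmul_mul_tmul]
    rw [← h]
    simpa [map_sum, Algebra.TensorProduct.one_def] using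
      congrArg (LinearMap.rTensor H S) (sum_tmul_algebraMap_counit_eq_one hr hex2)
  rw [sum_antipode_tmul_eq_inv hr hex1, Units.inv_mul_eq_one] at hinv
  exact hinv.symm

theorem sum_antipode_sq_tmul_antipode_mul_eq_one (hr : IsUnit (∑ i, a i ⊗ₜ[R] b i))
    (hex1 : (∑ i, (Coalgebra.comul (R := R) (a i)) ⊗ₜ[R] b i : (H ⊗[R] H) ⊗[R] H)
        = (∑ i, (a i ⊗ₜ[R] (1:H)) ⊗ₜ[R] b i) * (∑ i, ((1:H) ⊗ₜ[R] a i) ⊗ₜ[R] b i))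
    (hex2 : (∑ i, a i ⊗ₜ[R] (Coalgebra.comul (R := R) (b i)) : H ⊗[R] (H ⊗[R] H))
        = (∑ i, a i ⊗ₜ[R] ((1:H) ⊗ₜ[R] b i)) * (∑ i, a i ⊗ₜ[R] (b i ⊗ₜ[R] (1:H)))) :
    (∑ i, S (S (a i)) ⊗ₜ[R] S (b i)) * (∑ i, a i ⊗ₜ[R] b i) = 1 := by
  have h := congrArg (LinearMap.rTensor H S) (sum_antipode_tmul_antipode hr hex1 hex2)
  simp only [map_sum, LinearMap.rTensor_tmul] at h
  rw [h]
  exact sum_antipode_tmul_mul_eq_one_s14 hr hex1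

theorem mul_sum_tmul_leftInverse_eq_one {g : H →ₗ[R] H} (hg : Function.LeftInverse g S)
    (hr : IsUnit (∑ i, a i ⊗ₜ[R] b i))
    (hex1 : (∑ i, (Coalgebra.comul (R := R) (a i)) ⊗ₜ[R] b i : (H ⊗[R] H) ⊗[R] H)
        = (∑ i, (a i ⊗ₜ[R] (1:H)) ⊗ₜ[R] b i) * (∑ i, ((1:H) ⊗ₜ[R] a i) ⊗ₜ[R] b i))
    (hex2 : (∑ i, a i ⊗ₜ[R] (Coalgebra.comul (R := R) (b i)) : H ⊗[R] (H ⊗[R] H))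
        = (∑ i, a i ⊗ₜ[R] ((1:H) ⊗ₜ[R] b i)) * (∑ i, a i ⊗ₜ[R] (b i ⊗ₜ[R] (1:H)))) :
    (∑ i, a i ⊗ₜ[R] b i) * (∑ i, a i ⊗ₜ[R] g (b i)) = 1 := by
  have h := congrArg (LinearMap.lTensor H g) (sum_antipode_tmul_antipode hr hex1 hex2)
  simp only [map_sum, LinearMap.lTensor_tmul, hg (b _)] at h
  rw [← h, sum_antipode_tmul_eq_inv hr hex1]
  exact hr.unit.mul_inv

end RMatrix

section TensorPairing

variable {R M : Type*} [CommSemiring R] [Semiring M] [Algebra R M]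

theorem mul'_map_comp_mulLeft_apply (φ ψ : Module.Dual R M) (p q : M) (t : M ⊗[R] M) :
    LinearMap.mul' R R (map (φ ∘ₗ LinearMap.mulLeft R p) (ψ ∘ₗ LinearMap.mulLeft R q) t)
      = LinearMap.mul' R R (map φ ψ ((p ⊗ₜ[R] q) * t)) := by
  rw [map_comp, ← LinearMap.mulLeft_tmul]
  rfl

theorem mul'_map_comp_mulRight_apply (φ ψ : Module.Dual R M) (u v : M) (t : M ⊗[R] M) :
    LinearMap.mul' R R (map (φ ∘ₗ LinearMap.mulRight R u) (ψ ∘ₗ LinearMap.mulRight R v) t)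
      = LinearMap.mul' R R (map φ ψ (t * (u ⊗ₜ[R] v))) := by
  rw [map_comp, ← LinearMap.mulRight_tmul]
  rfl

theorem mul'_map_comm_apply (φ ψ : Module.Dual R M) (t : M ⊗[R] M) :
    LinearMap.mul' R R (map φ ψ (TensorProduct.comm R M M t))
      = LinearMap.mul' R R (map ψ φ t) := by
  induction t using TensorProduct.induction_on with
  | zero => simp
  | tmul x y => simp [mul_comm]
  | add s t hs ht => simp only [map_add, hs, ht]

end TensorPairing

section Coend

variable {ι : Type*} [Fintype ι]

local notation "S" => HopfAlgebra.antipode k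

noncomputable def coendMul (a b : ι → A) (φ ψ : Module.Dual k A) : Module.Dual k A :=
  ∑ i, ∑ j, conv (φ ∘ₗ LinearMap.mulRight k (a i) ∘ₗ LinearMap.mulLeft k (a j))
    (ψ ∘ₗ LinearMap.mulLeft k (S (b i) * b j))

theorem conv_apply (φ ψ : Module.Dual k A) (h : A) :
    conv φ ψ h = LinearMap.mul' k k (map φ ψ (Coalgebra.comul h)) := rfl

theorem coendMul_left_eq_conv {a b : ι → A} {μ : Module.Dual k A}
    (hcyc : ∀ x y : A, μ (x * y) = μ (S (S y) * x))
    (hinv : (∑ i, S (S (a i)) ⊗ₜ[k] S (b i)) * (∑ i, a i ⊗ₜ[k] b i) = 1)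
    (φ : Module.Dual k A) : coendMul a b μ φ = conv μ φ := by
  have hμ : ∀ i j, μ ∘ₗ LinearMap.mulRight k (a i) ∘ₗ LinearMap.mulLeft k (a j)
      = μ ∘ₗ LinearMap.mulLeft k (S (S (a i)) * a j) := by
    intro i j
    ext x
    simp only [LinearMap.comp_apply, LinearMap.mulRight_apply, LinearMap.mulLeft_apply]
    rw [hcyc, mul_assoc]
  ext h
  calc coendMul a b μ φ h
      = ∑ i, ∑ j, LinearMap.mul' k k
          (map μ φ (((S (S (a i)) * a j) ⊗ₜ[k] (S (b i) * b j)) * Coalgebra.comul h)) := by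
        simp only [coendMul, LinearMap.coe_sum, Finset.sum_apply, conv_apply, hμ,
          mul'_map_comp_mulLeft_apply]
    _ = LinearMap.mul' k k (map μ φ (((∑ i, S (S (a i)) ⊗ₜ[k] S (b i)) * ∑ i, a i ⊗ₜ[k] b i)
          * Coalgebra.comul h)) := by
        rw [Finset.sum_mul_sum]
        simp only [Algebra.TensorProduct.tmul_mul_tmul, Finset.sum_mul, map_sum]
    _ = conv μ φ h := by rw [hinv, one_mul, conv_apply]

theorem conv_comp_mulRight_comp_mulLeft_apply (φ ψ : Module.Dual k A) (u p v q h : A) :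
    conv (φ ∘ₗ LinearMap.mulRight k u ∘ₗ LinearMap.mulLeft k p)
        (ψ ∘ₗ LinearMap.mulRight k v ∘ₗ LinearMap.mulLeft k q) h
      = LinearMap.mul' k k (map φ ψ ((p ⊗ₜ[k] q) * Coalgebra.comul h * (u ⊗ₜ[k] v))) := by
  rw [conv_apply, ← LinearMap.comp_assoc, ← LinearMap.comp_assoc, mul'_map_comp_mulLeft_apply,
    mul'_map_comp_mulRight_apply]

theorem coendMul_right_eq_conv {a b : ι → A} {μ : Module.Dual k A} {Sinv : A → A}
    (hS : Function.RightInverse Sinv S)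
    (hcyc : ∀ x y : A, μ (x * y) = μ (S (S y) * x))
    (hR : ∀ x : A, (∑ i, a i ⊗ₜ[k] b i) * Coalgebra.comul x
        = TensorProduct.comm k A A (Coalgebra.comul x) * (∑ i, a i ⊗ₜ[k] b i))
    (hinv : (∑ i, a i ⊗ₜ[k] b i) * (∑ i, a i ⊗ₜ[k] Sinv (b i)) = 1)
    (φ : Module.Dual k A) : coendMul a b φ μ = conv μ φ := by
  have hμ : ∀ i j, μ ∘ₗ LinearMap.mulLeft k (S (b i) * b j)
      = μ ∘ₗ LinearMap.mulRight k (Sinv (b i)) ∘ₗ LinearMap.mulLeft k (b j) := by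
    intro i j
    ext x
    simp only [LinearMap.comp_apply, LinearMap.mulRight_apply, LinearMap.mulLeft_apply]
    rw [hcyc (b j * x), hS, mul_assoc]
  ext h
  calc coendMul a b φ μ h
      = ∑ i, ∑ j, LinearMap.mul' k k
          (map φ μ ((a j ⊗ₜ[k] b j) * Coalgebra.comul h * (a i ⊗ₜ[k] Sinv (b i)))) := by
        simp only [coendMul, LinearMap.coe_sum, Finset.sum_apply, hμ,
          conv_comp_mulRight_comp_mulLeft_apply]
    _ = LinearMap.mul' k k (map φ μ ((∑ i, a i ⊗ₜ[k] b i) * Coalgebra.comul h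
          * ∑ i, a i ⊗ₜ[k] Sinv (b i))) := by
        simp only [Finset.mul_sum, Finset.sum_mul, map_sum]
    _ = conv μ φ h := by
        rw [hR, mul_assoc, hinv, mul_one, mul'_map_comm_apply, conv_apply]

end Coend

theorem right_integral_is_two_sided_cointegral_general
    (Sinv : A →ₗ[k] A)
    (hS1 : ∀ x : A, Sinv (HopfAlgebra.antipode (R := k) x) = x)
    (hS2 : ∀ x : A, HopfAlgebra.antipode (R := k) (Sinv x) = x)
    -- the R-matrix
    (ι : Type) [Fintype ι] (a b : ι → A)
    (hRunit : IsUnit (∑ i, a i ⊗ₜ[k] b i))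
    (hIntertwine : ∀ x : A, (∑ i, a i ⊗ₜ[k] b i) * Coalgebra.comul x
        = (TensorProduct.comm k A A) (Coalgebra.comul x) * (∑ i, a i ⊗ₜ[k] b i))
    (hex1 : (∑ i, (Coalgebra.comul (R := k) (a i)) ⊗ₜ[k] b i : (A ⊗[k] A) ⊗[k] A)
        = (∑ i, (a i ⊗ₜ[k] (1:A)) ⊗ₜ[k] b i) * (∑ i, ((1:A) ⊗ₜ[k] a i) ⊗ₜ[k] b i))
    (hex2 : (∑ i, a i ⊗ₜ[k] (Coalgebra.comul (R := k) (b i)) : A ⊗[k] (A ⊗[k] A))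
        = (∑ i, a i ⊗ₜ[k] ((1:A) ⊗ₜ[k] b i)) * (∑ i, a i ⊗ₜ[k] (b i ⊗ₜ[k] (1:A))))
    -- the right integral `μʳ` on `H`, with its quasi-cyclicity property
    (μr : Module.Dual k A)
    (hInt : ∀ φ : Module.Dual k A, conv μr φ = φ 1 • μr)
    (hcyc : ∀ x y : A,
      μr (x * y) = μr (HopfAlgebra.antipode (R := k) (HopfAlgebra.antipode (R := k) y) * x))
    -- the multiplication of the coend `K = H*`
    (mK : Module.Dual k A → Module.Dual k A → Module.Dual k A)
    (hmK : ∀ φ ψ : Module.Dual k A,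
      mK φ ψ = ∑ i, ∑ j, conv
        (φ ∘ₗ LinearMap.mulRight k (a i) ∘ₗ LinearMap.mulLeft k (a j))
        (ψ ∘ₗ LinearMap.mulLeft k (HopfAlgebra.antipode (R := k) (b i) * b j))) :
    ∀ φ : Module.Dual k A, mK μr φ = φ 1 • μr ∧ mK φ μr = φ 1 • μr := by
  intro φ
  rw [hmK, hmK, ← hInt φ]
  exact ⟨coendMul_left_eq_conv hcyc
      (sum_antipode_sq_tmul_antipode_mul_eq_one hRunit hex1 hex2) φ,
    coendMul_right_eq_conv hS2 hcyc hIntertwine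
      (mul_sum_tmul_leftInverse_eq_one hS1 hRunit hex1 hex2) φ⟩

/-- For the coend `K = H*` of `mod_l(H)` with multiplication
`m_K(φ ⊗ ψ) = φ(aⱼ ? aᵢ) ⋆ ψ(S(bᵢ)bⱼ ?)`, the right integral `μʳ` on `H` is a
two-sided cointegral: `m_K(μʳ ⊗ φ) = m_K(φ ⊗ μʳ) = φ(1) μʳ`. -/
theorem right_integral_is_two_sided_cointegral
    [FiniteDimensional k A]
    (Sinv : A →ₗ[k] A)
    (hS1 : ∀ x : A, Sinv (HopfAlgebra.antipode (R := k) x) = x)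
    (hS2 : ∀ x : A, HopfAlgebra.antipode (R := k) (Sinv x) = x)
    -- the R-matrix
    (ι : Type) [Fintype ι] (a b : ι → A)
    (hRunit : IsUnit (∑ i, a i ⊗ₜ[k] b i))
    (hIntertwine : ∀ x : A, (∑ i, a i ⊗ₜ[k] b i) * Coalgebra.comul x
        = (TensorProduct.comm k A A) (Coalgebra.comul x) * (∑ i, a i ⊗ₜ[k] b i))
    (hex1 : (∑ i, (Coalgebra.comul (R := k) (a i)) ⊗ₜ[k] b i : (A ⊗[k] A) ⊗[k] A)
        = (∑ i, (a i ⊗ₜ[k] (1:A)) ⊗ₜ[k] b i) * (∑ i, ((1:A) ⊗ₜ[k] a i) ⊗ₜ[k] b i))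
    (hex2 : (∑ i, a i ⊗ₜ[k] (Coalgebra.comul (R := k) (b i)) : A ⊗[k] (A ⊗[k] A))
        = (∑ i, a i ⊗ₜ[k] ((1:A) ⊗ₜ[k] b i)) * (∑ i, a i ⊗ₜ[k] (b i ⊗ₜ[k] (1:A))))
    -- the right integral `μʳ` on `H`, with its quasi-cyclicity property
    (μr : Module.Dual k A)
    (hInt : ∀ φ : Module.Dual k A, conv μr φ = φ 1 • μr)
    (hcyc : ∀ x y : A,
      μr (x * y) = μr (HopfAlgebra.antipode (R := k) (HopfAlgebra.antipode (R := k) y) * x))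
    -- the multiplication of the coend `K = H*`
    (mK : Module.Dual k A → Module.Dual k A → Module.Dual k A)
    (hmK : ∀ φ ψ : Module.Dual k A,
      mK φ ψ = ∑ i, ∑ j, conv
        (φ ∘ₗ LinearMap.mulRight k (a i) ∘ₗ LinearMap.mulLeft k (a j))
        (ψ ∘ₗ LinearMap.mulLeft k (HopfAlgebra.antipode (R := k) (b i) * b j))) :
    ∀ φ : Module.Dual k A, mK μr φ = φ 1 • μr ∧ mK φ μr = φ 1 • μr :=
  right_integral_is_two_sided_cointegral_general Sinv hS1 hS2 ι a b hRunit hIntertwine hex1 hex2 μr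
    hInt hcyc mK hmK
end
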